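/- arXiv:2011.14591 — 9 statements merged into one kernel-verified Lean document; each statement's English description precedes it below -/
import Mathlib

section
/- Let X be a real Banach space. Then X has the Ball Dentable Property (BDP) if and only if the bidual X** has the w*-Ball Dentable Property (w*-BDP) with respect to the weak* topology σ(X**, X*). -/
open Metric Topology
open scoped ENNReal

noncomputable section

/-- The ballSlice of the closed unit ball of `X` determined by the functional `f` and `α`. -/
def ballSlice (X : Type*) [NormedAddCommGroup X] [NormedSpace ℝ X]
    (f : X →L[ℝ] ℝ) (α : ℝ) : Set X :=
  {x ∈ closedBall (0 : X) 1 | 1 - α < f x}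

/-- The convex combination (Minkowski sum) `∑ i, l i • S i` of the sets `S i`. -/
def combSlices {X : Type*} [NormedAddCommGroup X] [NormedSpace ℝ X]
    {n : ℕ} (l : Fin n → ℝ) (S : Fin n → Set X) : Set X :=
  {x | ∃ v : Fin n → X, (∀ i, v i ∈ S i) ∧ x = ∑ i, l i • v i}

/-- The weak topology `σ(X, X*)` on `X`. -/
def weakTopology (X : Type*) [NormedAddCommGroup X] [NormedSpace ℝ X] :
    TopologicalSpace X :=
  ⨅ f : X →L[ℝ] ℝ, TopologicalSpace.induced f inferInstance

/-- The weak-star topology `σ(X*, X)` on the dual `X*` of `X`. -/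
def wstarTopology (X : Type*) [NormedAddCommGroup X] [NormedSpace ℝ X] :
    TopologicalSpace (X →L[ℝ] ℝ) :=
  ⨅ x : X, TopologicalSpace.induced (fun f : X →L[ℝ] ℝ => f x) inferInstance

/-- Ball Dentable Property: the closed unit ball has slices of arbitrarily small diameter. -/
def BDP (X : Type*) [NormedAddCommGroup X] [NormedSpace ℝ X] : Prop :=
  ∀ ε > 0, ∃ (f : X →L[ℝ] ℝ) (α : ℝ), ‖f‖ = 1 ∧ 0 < α ∧
    Metric.diam (ballSlice X f α) < ε

/-- Ball Huskable Property: the closed unit ball has nonempty relatively weakly open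
subsets of arbitrarily small diameter. -/
def BHP (X : Type*) [NormedAddCommGroup X] [NormedSpace ℝ X] : Prop :=
  ∀ ε > 0, ∃ U : Set X, IsOpen[weakTopology X] U ∧
    (U ∩ closedBall (0 : X) 1).Nonempty ∧
    Metric.diam (U ∩ closedBall (0 : X) 1) < ε

/-- Ball Small Combination of Slices Property: the closed unit ball has convex
combinations of slices of arbitrarily small diameter. -/
def BSCSP (X : Type*) [NormedAddCommGroup X] [NormedSpace ℝ X] : Prop :=
  ∀ ε > 0, ∃ (n : ℕ) (f : Fin n → (X →L[ℝ] ℝ)) (α l : Fin n → ℝ),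
    (∀ i, ‖f i‖ = 1) ∧ (∀ i, 0 < α i) ∧ (∀ i, 0 ≤ l i) ∧ (∑ i, l i = 1) ∧
    Metric.diam (combSlices l (fun i => ballSlice X (f i) (α i))) < ε

/-- The weak-star ballSlice of the closed unit ball of `X*` determined by `x ∈ X` and `α`. -/
def wstarSlice (X : Type*) [NormedAddCommGroup X] [NormedSpace ℝ X]
    (x : X) (α : ℝ) : Set (X →L[ℝ] ℝ) :=
  {f ∈ closedBall (0 : X →L[ℝ] ℝ) 1 | 1 - α < f x}

/-- `X*` has the weak-star Ball Dentable Property: the closed unit ball of `X*` has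
weak-star slices of arbitrarily small diameter. -/
def wstarBDP (X : Type*) [NormedAddCommGroup X] [NormedSpace ℝ X] : Prop :=
  ∀ ε > 0, ∃ (x : X) (α : ℝ), ‖x‖ = 1 ∧ 0 < α ∧
    Metric.diam (wstarSlice X x α) < ε

/-- `X*` has the weak-star Ball Huskable Property: the closed unit ball of `X*` has
nonempty relatively weak-star open subsets of arbitrarily small diameter. -/
def wstarBHP (X : Type*) [NormedAddCommGroup X] [NormedSpace ℝ X] : Prop :=
  ∀ ε > 0, ∃ U : Set (X →L[ℝ] ℝ), IsOpen[wstarTopology X] U ∧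
    (U ∩ closedBall (0 : X →L[ℝ] ℝ) 1).Nonempty ∧
    Metric.diam (U ∩ closedBall (0 : X →L[ℝ] ℝ) 1) < ε

/-- `X*` has the weak-star Ball Small Combination of Slices Property: the closed unit
ball of `X*` has convex combinations of weak-star slices of arbitrarily small diameter. -/
def wstarBSCSP (X : Type*) [NormedAddCommGroup X] [NormedSpace ℝ X] : Prop :=
  ∀ ε > 0, ∃ (n : ℕ) (x : Fin n → X) (α l : Fin n → ℝ),
    (∀ i, ‖x i‖ = 1) ∧ (∀ i, 0 < α i) ∧ (∀ i, 0 ≤ l i) ∧ (∑ i, l i = 1) ∧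
    Metric.diam (combSlices l (fun i => wstarSlice X (x i) (α i))) < ε

/-- `Y` is an M-ideal in `X`: there is an L-projection on `X*` whose kernel is the
annihilator of `Y`. -/
def IsMIdeal {X : Type*} [NormedAddCommGroup X] [NormedSpace ℝ X]
    (Y : Subspace ℝ X) : Prop :=
  ∃ P : (X →L[ℝ] ℝ) →L[ℝ] (X →L[ℝ] ℝ),
    (∀ f, P (P f) = P f) ∧
    (∀ f, ‖f‖ = ‖P f‖ + ‖f - P f‖) ∧
    (∀ f, P f = 0 ↔ ∀ y ∈ Y, f y = 0)

/-- `Y` is a strict ideal in `X`: there is a norm-one projection `P` on `X*` with kernel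
the annihilator of `Y` whose range has weak-star dense unit ball in the unit ball of `X*`. -/
def IsStrictIdeal {X : Type*} [NormedAddCommGroup X] [NormedSpace ℝ X]
    (Y : Subspace ℝ X) : Prop :=
  ∃ P : (X →L[ℝ] ℝ) →L[ℝ] (X →L[ℝ] ℝ),
    ‖P‖ = 1 ∧
    (∀ f, P (P f) = P f) ∧
    (∀ f, P f = 0 ↔ ∀ y ∈ Y, f y = 0) ∧
    closedBall (0 : X →L[ℝ] ℝ) 1 ⊆
      @closure _ (wstarTopology X) (Set.range P ∩ closedBall (0 : X →L[ℝ] ℝ) 1)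

/-!
The canonical embedding `X → X**` maps the slice `S(B_X, f, α)` isometrically into the
w*-slice `S(B_{X**}, f, α)`. Conversely, by Goldstine's theorem (here only its finite-dimensional
core: Hahn–Banach separation in `ℝ × ℝ`), for every `F` in the w*-slice and every `h ∈ X*`
there are points `x` of the slice with `h x` arbitrarily close to `F h`; testing `F - G`
against `h ∈ B_{X*}` then bounds `‖F - G‖` by the diameter of the slice. So both slices have
the same diameter.
-/
section

variable {X : Type*} [NormedAddCommGroup X] [NormedSpace ℝ X]

theorem mem_closure_image_closedBall_of_bidual {E : Type*} [NormedAddCommGroup E]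
    [NormedSpace ℝ E] {F : (X →L[ℝ] ℝ) →L[ℝ] ℝ} (hF : ‖F‖ ≤ 1) (T : X →L[ℝ] E) {p : E}
    (hp : ∀ φ : E →L[ℝ] ℝ, φ p = F (φ ∘L T)) :
    p ∈ closure (T '' closedBall 0 1) := by
  by_contra hp'
  obtain ⟨φ, s, hφs, hsφ⟩ := geometric_hahn_banach_closed_point
    ((convex_closedBall (0 : X) 1).linear_image T.toLinearMap).closure isClosed_closure hp'
  have hφT : ∀ x ∈ closedBall (0 : X) 1, φ (T x) < s := fun x hx =>
    hφs _ (subset_closure (Set.mem_image_of_mem T hx))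
  have hs : 0 ≤ s := by simpa using (hφT 0 (mem_closedBall_self zero_le_one)).le
  have hnorm : ‖φ ∘L T‖ ≤ s := by
    refine ContinuousLinearMap.opNorm_le_of_unit_norm hs fun x hx => ?_
    have h₁ := hφT x (by simp [hx])
    have h₂ := hφT (-x) (by simp [hx])
    simp only [map_neg] at h₂
    rw [ContinuousLinearMap.comp_apply, Real.norm_eq_abs, abs_le]
    constructor <;> linarith
  have hφp : φ p ≤ s := calc
    φ p = F (φ ∘L T) := hp φ
    _ ≤ ‖F‖ * ‖φ ∘L T‖ := (le_abs_self _).trans (F.le_opNorm _)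
    _ ≤ 1 * s := mul_le_mul hF hnorm (norm_nonneg _) zero_le_one
    _ = s := one_mul s
  exact hsφ.not_ge hφp

theorem apply_prod_bidual_eq_bidual_comp (F : (X →L[ℝ] ℝ) →L[ℝ] ℝ) (f h : X →L[ℝ] ℝ)
    (φ : ℝ × ℝ →L[ℝ] ℝ) : φ (F f, F h) = F (φ ∘L f.prod h) := by
  have hφ : ∀ a b : ℝ, φ (a, b) = a * φ (1, 0) + b * φ (0, 1) := fun a b => by
    rw [← smul_eq_mul, ← smul_eq_mul, ← map_smul, ← map_smul, ← map_add]
    simp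
  have hφfh : φ ∘L f.prod h = φ (1, 0) • f + φ (0, 1) • h := by
    ext x
    rw [ContinuousLinearMap.comp_apply, ContinuousLinearMap.prod_apply, hφ]
    simp [mul_comm]
  rw [hφfh, hφ]
  simp [mul_comm]

theorem exists_mem_ballSlice_abs_sub_lt {f : X →L[ℝ] ℝ} {α : ℝ} {F : (X →L[ℝ] ℝ) →L[ℝ] ℝ}
    (hF : F ∈ wstarSlice (X →L[ℝ] ℝ) f α) (h : X →L[ℝ] ℝ) {η : ℝ} (hη : 0 < η) :
    ∃ x ∈ ballSlice X f α, |h x - F h| < η := by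
  have hmem : (F f, F h) ∈ closure (f.prod h '' closedBall 0 1) :=
    mem_closure_image_closedBall_of_bidual (mem_closedBall_zero_iff.mp hF.1) _
      (apply_prod_bidual_eq_bidual_comp F f h)
  obtain ⟨_, hxU, x, hx, rfl⟩ := mem_closure_iff.mp hmem (Set.Ioi (1 - α) ×ˢ ball (F h) η)
    (isOpen_Ioi.prod isOpen_ball) ⟨hF.2, mem_ball_self hη⟩
  exact ⟨x, ⟨hx, hxU.1⟩, hxU.2⟩

theorem isBounded_ballSlice (f : X →L[ℝ] ℝ) (α : ℝ) :
    Bornology.IsBounded (ballSlice X f α) :=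
  isBounded_closedBall.subset fun _ hx => hx.1

theorem bidual_apply_sub_le_diam_ballSlice {f : X →L[ℝ] ℝ} {α : ℝ}
    {F G : (X →L[ℝ] ℝ) →L[ℝ] ℝ} (hF : F ∈ wstarSlice (X →L[ℝ] ℝ) f α)
    (hG : G ∈ wstarSlice (X →L[ℝ] ℝ) f α) {h : X →L[ℝ] ℝ} (hh : ‖h‖ ≤ 1) :
    F h - G h ≤ diam (ballSlice X f α) := by
  refine le_of_forall_pos_lt_add fun η hη => ?_
  obtain ⟨x, hx, hFx⟩ := exists_mem_ballSlice_abs_sub_lt hF h (half_pos hη)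
  obtain ⟨y, hy, hGy⟩ := exists_mem_ballSlice_abs_sub_lt hG h (half_pos hη)
  have hxy : h x - h y ≤ diam (ballSlice X f α) := calc
    h x - h y ≤ ‖h (x - y)‖ := by rw [map_sub]; exact le_abs_self _
    _ ≤ 1 * ‖x - y‖ := h.le_of_opNorm_le hh _
    _ = dist x y := by rw [one_mul, dist_eq_norm]
    _ ≤ diam (ballSlice X f α) := dist_le_diam_of_mem (isBounded_ballSlice f α) hx hy
  rw [abs_lt] at hFx hGy
  linarith [hFx.1, hGy.2]

theorem diam_wstarSlice_bidual_le (f : X →L[ℝ] ℝ) (α : ℝ) :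
    diam (wstarSlice (X →L[ℝ] ℝ) f α) ≤ diam (ballSlice X f α) := by
  refine diam_le_of_forall_dist_le diam_nonneg fun F hF G hG => ?_
  rw [dist_eq_norm]
  refine ContinuousLinearMap.opNorm_le_of_unit_norm diam_nonneg fun h hh => ?_
  rw [sub_apply, Real.norm_eq_abs, abs_sub_le_iff]
  exact ⟨bidual_apply_sub_le_diam_ballSlice hF hG hh.le,
    bidual_apply_sub_le_diam_ballSlice hG hF hh.le⟩

theorem diam_ballSlice_le_diam_wstarSlice_bidual (f : X →L[ℝ] ℝ) (α : ℝ) :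
    diam (ballSlice X f α) ≤ diam (wstarSlice (X →L[ℝ] ℝ) f α) := by
  let J := NormedSpace.inclusionInDoubleDualLi ℝ (E := X)
  have hJ : J '' ballSlice X f α ⊆ wstarSlice (X →L[ℝ] ℝ) f α := by
    rintro _ ⟨x, ⟨hx, hfx⟩, rfl⟩
    refine ⟨?_, hfx⟩
    rwa [mem_closedBall_zero_iff, J.norm_map, ← mem_closedBall_zero_iff]
  rw [← J.isometry.diam_image]
  exact diam_mono hJ (isBounded_closedBall.subset fun _ hF => hF.1)

theorem diam_wstarSlice_bidual_eq (f : X →L[ℝ] ℝ) (α : ℝ) :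
    diam (wstarSlice (X →L[ℝ] ℝ) f α) = diam (ballSlice X f α) :=
  (diam_wstarSlice_bidual_le f α).antisymm (diam_ballSlice_le_diam_wstarSlice_bidual f α)

end

theorem bdp_iff_bidual_wstarBDP_general (X : Type*) [NormedAddCommGroup X] [NormedSpace ℝ X] :
    BDP X ↔ wstarBDP (X →L[ℝ] ℝ) := by
  simp only [BDP, wstarBDP, diam_wstarSlice_bidual_eq]

/-- A Banach space `X` has the Ball Dentable Property if and only if its
bidual `X**` has the weak-star Ball Dentable Property with respect to `σ(X**, X*)`. -/
theorem bdp_iff_bidual_wstarBDP (X : Type*) [NormedAddCommGroup X] [NormedSpace ℝ X]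
    [CompleteSpace X] :
    BDP X ↔ wstarBDP (X →L[ℝ] ℝ) :=
  bdp_iff_bidual_wstarBDP_general X
end
end

section
/- Let X be a real Banach space. Then X has the Ball Huskable Property (BHP) if and only if the bidual X** has the w*-Ball Huskable Property (w*-BHP), i.e., for every ε > 0 the closed unit ball B_{X**} has a nonempty relatively σ(X**, X*)-open subset of norm-diameter less than ε. -/
/-!
The canonical map `J : X → X**` embeds `X` with its weak topology topologically into `X**` with
its weak-star topology, so the relatively weakly open subsets of `B_X` are the
sets `J⁻¹ V ∩ B_X` with `V` weak-star open. By Goldstine's theorem, `V ∩ B_{X**}` lies in the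
weak-star closure of `J (J⁻¹ V ∩ B_X)`; norm-closed balls of `X**` are weak-star closed, so this
closure has the same norm diameter, and `J` is an isometry. Hence `J⁻¹ V ∩ B_X` and
`V ∩ B_{X**}` are empty together and have the same diameter.
-/

open Metric Topology
open scoped ENNReal

noncomputable section

open NormedSpace Set

lemma ContinuousLinearMap.norm_le_of_forall_mem_closedBall_apply_le {X : Type*}
    [NormedAddCommGroup X] [NormedSpace ℝ X] (g : X →L[ℝ] ℝ) {u : ℝ}
    (h : ∀ x ∈ closedBall (0 : X) 1, g x ≤ u) : ‖g‖ ≤ u := by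
  have hu : 0 ≤ u := by simpa using h 0 (mem_closedBall_self zero_le_one)
  refine g.opNorm_le_of_unit_norm hu fun x hx => abs_le.2 ⟨?_, h x (by simp [hx])⟩
  exact neg_le.1 (by simpa using h (-x) (by simp [hx]))

lemma WeakDual.exists_forall_apply_eq_apply {E : Type*} [NormedAddCommGroup E]
    [NormedSpace ℝ E] (φ : StrongDual ℝ (WeakDual ℝ E)) :
    ∃ g : E, ∀ T : WeakDual ℝ E, φ T = T g := by
  obtain ⟨g, hg⟩ := LinearMap.dualEmbedding_surjective (topDualPairing ℝ E) φ
  exact ⟨g, fun T => by rw [← hg]; rfl⟩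

/-- Goldstine's theorem. -/
theorem WeakDual.toStrongDual_preimage_closedBall_subset_closure_inclusionInDoubleDual
    (X : Type*) [NormedAddCommGroup X] [NormedSpace ℝ X] :
    toStrongDual ⁻¹' closedBall (0 : StrongDual ℝ (StrongDual ℝ X)) 1 ⊆
      closure (StrongDual.toWeakDual ∘ inclusionInDoubleDual ℝ X '' closedBall 0 1) := by
  have : LocallyConvexSpace ℝ (WeakDual ℝ (StrongDual ℝ X)) :=
    WeakBilin.locallyConvexSpace (B := topDualPairing ℝ _)
  intro T hT
  by_contra hT'
  have hconv : Convex ℝ (closure (StrongDual.toWeakDual ∘ inclusionInDoubleDual ℝ X ''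
      closedBall (0 : X) 1)) :=
    ((convex_closedBall (0 : X) 1).linear_image
      (StrongDual.toWeakDual.toLinearMap ∘ₗ (inclusionInDoubleDual ℝ X).toLinearMap)).closure
  obtain ⟨φ, u, hφu, huT⟩ := geometric_hahn_banach_closed_point hconv isClosed_closure hT'
  obtain ⟨g, hφ⟩ := WeakDual.exists_forall_apply_eq_apply φ
  have hg : ‖g‖ ≤ u := g.norm_le_of_forall_mem_closedBall_apply_le fun x hx => by
    simpa [hφ] using (hφu _ (subset_closure ⟨x, hx, rfl⟩)).le
  have hT1 : ‖toStrongDual T‖ ≤ 1 :=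
    (mem_closedBall_zero_iff (E := StrongDual ℝ (StrongDual ℝ X))).1 hT
  have hTg : T g ≤ u :=
    calc T g ≤ ‖toStrongDual T‖ * ‖g‖ := (le_abs_self _).trans ((toStrongDual T).le_opNorm g)
      _ ≤ 1 * u := mul_le_mul hT1 hg (norm_nonneg _) zero_le_one
      _ = u := one_mul u
  exact huT.not_ge (hφ T ▸ hTg)

lemma dist_le_of_mem_closure_of_isClosed_closedBall {α : Type*} [PseudoMetricSpace α]
    {t : TopologicalSpace α} (ht : ∀ x r, IsClosed[t] (closedBall x r)) {s : Set α} {d : ℝ}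
    (hs : ∀ a ∈ s, ∀ b ∈ s, dist a b ≤ d) {a b : α} (ha : a ∈ closure[t] s)
    (hb : b ∈ closure[t] s) : dist a b ≤ d := by
  have hs' : ∀ c ∈ s, dist a c ≤ d := fun c hc =>
    (@closure_minimal _ t _ _ (fun a' ha' => hs a' ha' c hc) (ht c d)) ha
  rw [dist_comm]
  exact (@closure_minimal _ t _ _ (fun b' hb' => (dist_comm b' a).trans_le (hs' b' hb'))
    (ht a d)) hb

lemma weakTopology_eq_induced_inclusionInDoubleDual (X : Type*) [NormedAddCommGroup X]
    [NormedSpace ℝ X] :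
    weakTopology X = (wstarTopology (X →L[ℝ] ℝ)).induced (inclusionInDoubleDualLi ℝ) := by
  simp only [weakTopology, wstarTopology, induced_iInf, induced_compose]
  rfl

lemma wstarTopology_eq_weakDual (E : Type*) [NormedAddCommGroup E] [NormedSpace ℝ E] :
    wstarTopology E = instTopologicalSpaceWeakDual ℝ E :=
  (induced_to_pi _).symm

lemma isClosed_wstarTopology_closedBall {E : Type*} [NormedAddCommGroup E] [NormedSpace ℝ E]
    (x : E →L[ℝ] ℝ) (r : ℝ) : IsClosed[wstarTopology E] (closedBall x r) := by
  rw [wstarTopology_eq_weakDual]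
  exact WeakDual.isClosed_closedBall x r

section Bidual

variable {X : Type*} [NormedAddCommGroup X] [NormedSpace ℝ X]

lemma mapsTo_inclusionInDoubleDualLi_closedBall :
    MapsTo (inclusionInDoubleDualLi ℝ) (closedBall (0 : X) 1) (closedBall 0 1) := by
  intro x hx
  rw [mem_closedBall_zero_iff (E := StrongDual ℝ (StrongDual ℝ X)), LinearIsometry.norm_map]
  exact mem_closedBall_zero_iff.1 hx

lemma closedBall_subset_wstarClosure_inclusionInDoubleDualLi_image :
    closedBall (0 : (X →L[ℝ] ℝ) →L[ℝ] ℝ) 1 ⊆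
      closure[wstarTopology (X →L[ℝ] ℝ)]
        (inclusionInDoubleDualLi ℝ '' closedBall (0 : X) 1) := by
  rw [wstarTopology_eq_weakDual]
  exact WeakDual.toStrongDual_preimage_closedBall_subset_closure_inclusionInDoubleDual X

variable {V : Set ((X →L[ℝ] ℝ) →L[ℝ] ℝ)}

lemma inter_closedBall_subset_wstarClosure_image_preimage
    (hV : IsOpen[wstarTopology (X →L[ℝ] ℝ)] V) :
    V ∩ closedBall 0 1 ⊆ closure[wstarTopology (X →L[ℝ] ℝ)]
      (inclusionInDoubleDualLi ℝ '' (inclusionInDoubleDualLi ℝ ⁻¹' V ∩ closedBall (0 : X) 1)) :=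
  calc V ∩ closedBall 0 1
      ⊆ V ∩ closure[wstarTopology (X →L[ℝ] ℝ)] (inclusionInDoubleDualLi ℝ '' closedBall 0 1) :=
        inter_subset_inter_right _ closedBall_subset_wstarClosure_inclusionInDoubleDualLi_image
    _ ⊆ closure[wstarTopology (X →L[ℝ] ℝ)] (V ∩ inclusionInDoubleDualLi ℝ '' closedBall 0 1) :=
        @IsOpen.inter_closure _ (wstarTopology _) _ _ hV
    _ = _ := by rw [image_preimage_inter]

lemma nonempty_preimage_inclusionInDoubleDualLi_inter_closedBall_iff
    (hV : IsOpen[wstarTopology (X →L[ℝ] ℝ)] V) :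
    (inclusionInDoubleDualLi ℝ ⁻¹' V ∩ closedBall (0 : X) 1).Nonempty ↔
      (V ∩ closedBall 0 1).Nonempty := by
  refine ⟨fun ⟨x, hxV, hx⟩ => ⟨_, hxV, mapsTo_inclusionInDoubleDualLi_closedBall hx⟩,
    fun ⟨T, hT⟩ => ?_⟩
  exact ((@closure_nonempty_iff _ (wstarTopology _) _).1
    ⟨T, inter_closedBall_subset_wstarClosure_image_preimage hV hT⟩).of_image

lemma diam_preimage_inclusionInDoubleDualLi_inter_closedBall
    (hV : IsOpen[wstarTopology (X →L[ℝ] ℝ)] V) :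
    diam (inclusionInDoubleDualLi ℝ ⁻¹' V ∩ closedBall (0 : X) 1) =
      diam (V ∩ closedBall 0 1) := by
  set S := inclusionInDoubleDualLi ℝ ⁻¹' V ∩ closedBall (0 : X) 1
  have hS : Bornology.IsBounded (inclusionInDoubleDualLi ℝ '' S) :=
    (inclusionInDoubleDualLi ℝ).lipschitz.isBounded_image
      (isBounded_closedBall.subset inter_subset_right)
  rw [← (inclusionInDoubleDualLi ℝ).diam_image S]
  refine le_antisymm (diam_mono ?_ (isBounded_closedBall.subset inter_subset_right)) ?_
  · rintro _ ⟨x, ⟨hxV, hx⟩, rfl⟩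
    exact ⟨hxV, mapsTo_inclusionInDoubleDualLi_closedBall hx⟩
  · refine diam_le_of_forall_dist_le diam_nonneg fun T hT T' hT' => ?_
    exact dist_le_of_mem_closure_of_isClosed_closedBall isClosed_wstarTopology_closedBall
      (fun a ha b hb => dist_le_diam_of_mem hS ha hb)
      (inter_closedBall_subset_wstarClosure_image_preimage hV hT)
      (inter_closedBall_subset_wstarClosure_image_preimage hV hT')

end Bidual

theorem bhp_iff_bidual_wstarBHP_general (X : Type*) [NormedAddCommGroup X] [NormedSpace ℝ X] :
    BHP X ↔ wstarBHP (X →L[ℝ] ℝ) := by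
  refine forall₂_congr fun ε _ => ⟨?_, ?_⟩
  · rintro ⟨U, hU, hne, hdiam⟩
    rw [weakTopology_eq_induced_inclusionInDoubleDual] at hU
    obtain ⟨V, hV, rfl⟩ := hU
    exact ⟨V, hV, (nonempty_preimage_inclusionInDoubleDualLi_inter_closedBall_iff hV).1 hne,
      diam_preimage_inclusionInDoubleDualLi_inter_closedBall hV ▸ hdiam⟩
  · rintro ⟨V, hV, hne, hdiam⟩
    refine ⟨_, ?_, (nonempty_preimage_inclusionInDoubleDualLi_inter_closedBall_iff hV).2 hne,
      (diam_preimage_inclusionInDoubleDualLi_inter_closedBall hV).symm ▸ hdiam⟩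
    rw [weakTopology_eq_induced_inclusionInDoubleDual]
    exact ⟨V, hV, rfl⟩

/-- A Banach space `X` has the Ball Huskable Property if and only if its
bidual `X**` has the weak-star Ball Huskable Property with respect to `σ(X**, X*)`. -/
theorem bhp_iff_bidual_wstarBHP (X : Type*) [NormedAddCommGroup X] [NormedSpace ℝ X]
    [CompleteSpace X] :
    BHP X ↔ wstarBHP (X →L[ℝ] ℝ) :=
  bhp_iff_bidual_wstarBHP_general X
end
end

section
/- Let X be a real Banach space. Then X has the Ball Small Combination of Slices Property (BSCSP) if and only if the bidual X** has the w*-Ball Small Combination of Slices Property (w*-BSCSP) with respect to the weak* topology σ(X**, X*). -/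
/-!
The canonical embedding `J : X → X**` maps a convex combination `∑ λᵢ S(B_X, fᵢ, αᵢ)` of slices
isometrically into the convex combination `∑ λᵢ S(B_{X**}, fᵢ, αᵢ)` of weak-star slices with the
same data. Conversely, by Goldstine's theorem each weak-star slice lies in the weak-star closure of
`J (S(B_X, fᵢ, αᵢ))`, so the combination of weak-star slices lies in the weak-star closure of
`J (∑ λᵢ S(B_X, fᵢ, αᵢ))`; since norm-closed balls of `X**` are weak-star closed, this closure
has the same diameter. Hence the two combinations have equal diameters.
-/

open Metric Topology
open scoped ENNReal

noncomputable section

open NormedSpace Set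

theorem WeakDual.exists_lt_of_notMem_closure {V : Type*} [NormedAddCommGroup V]
    [NormedSpace ℝ V] {s : Set (WeakDual ℝ V)} (hs : Convex ℝ s) {F : WeakDual ℝ V}
    (hF : F ∉ closure s) : ∃ (v : V) (u : ℝ), (∀ a ∈ s, a v < u) ∧ u < F v := by
  have : LocallyConvexSpace ℝ (WeakDual ℝ V) :=
    WeakBilin.locallyConvexSpace (B := topDualPairing ℝ V)
  obtain ⟨φ, u, hφ, hFu⟩ := geometric_hahn_banach_closed_point hs.closure isClosed_closure hF
  obtain ⟨v, rfl⟩ := LinearMap.dualEmbedding_surjective (topDualPairing ℝ V) φ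
  exact ⟨v, u, fun a ha => hφ a (subset_closure ha), hFu⟩

def inclusionInWeakDoubleDual (E : Type*) [NormedAddCommGroup E] [NormedSpace ℝ E] :
    E →ₗ[ℝ] WeakDual ℝ (StrongDual ℝ E) :=
  StrongDual.toWeakDual.toLinearMap ∘ₗ (inclusionInDoubleDual ℝ E).toLinearMap

theorem toWeakDual_mem_closure_inclusionInWeakDoubleDual_closedBall {E : Type*}
    [NormedAddCommGroup E] [NormedSpace ℝ E] {F : StrongDual ℝ (StrongDual ℝ E)} (hF : ‖F‖ ≤ 1) :
    StrongDual.toWeakDual F ∈ closure (inclusionInWeakDoubleDual E '' closedBall 0 1) := by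
  by_contra hF'
  obtain ⟨g, u, hg, hFu⟩ := WeakDual.exists_lt_of_notMem_closure
    ((convex_closedBall (0 : E) 1).linear_image (inclusionInWeakDoubleDual E)) hF'
  replace hg : ∀ x ∈ closedBall (0 : E) 1, g x < u := fun x hx => hg _ (mem_image_of_mem _ hx)
  have hu : 0 < u := by simpa using hg 0 (by simp)
  have hgu : ‖g‖ ≤ u := by
    refine ContinuousLinearMap.opNorm_le_of_unit_norm hu.le fun x hx => ?_
    have h₁ := hg x (by simp [hx])
    have h₂ := hg (-x) (by simp [hx])
    rw [map_neg] at h₂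
    exact abs_le.2 ⟨by linarith, h₁.le⟩
  have : F g ≤ u :=
    calc F g ≤ ‖F‖ * ‖g‖ := (le_abs_self _).trans (F.le_opNorm g)
      _ ≤ 1 * u := mul_le_mul hF hgu (norm_nonneg g) zero_le_one
      _ = u := one_mul u
  exact hFu.not_ge this

section combSlices

variable {E : Type*} [NormedAddCommGroup E] [NormedSpace ℝ E] {n : ℕ} {l : Fin n → ℝ}

theorem combSlices_subset_of_convex {S : Fin n → Set E} {C : Set E} (hC : Convex ℝ C)
    (hl : ∀ i, 0 ≤ l i) (hsum : ∑ i, l i = 1) (hS : ∀ i, S i ⊆ C) : combSlices l S ⊆ C := by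
  rintro _ ⟨v, hv, rfl⟩
  exact hC.sum_mem (fun i _ => hl i) hsum fun i _ => hS i (hv i)

theorem sum_smul_mem_closure_image_combSlices {M : Type*} [AddCommMonoid M] [Module ℝ M]
    [TopologicalSpace M] [ContinuousAdd M] [ContinuousConstSMul ℝ M] (T : E →ₗ[ℝ] M)
    {S : Fin n → Set E} {w : Fin n → M} (hw : ∀ i, w i ∈ closure (T '' S i)) :
    ∑ i, l i • w i ∈ closure (T '' combSlices l S) := by
  have hΦ : Continuous fun w : Fin n → M => ∑ i, l i • w i := by fun_prop
  have hpi : w ∈ closure (univ.pi fun i => T '' S i) := by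
    rw [closure_pi_set]
    exact fun i _ => hw i
  refine closure_mono ?_ (image_closure_subset_closure_image hΦ (mem_image_of_mem _ hpi))
  rintro _ ⟨w, hw, rfl⟩
  choose v hv hvw using fun i => hw i (mem_univ i)
  exact ⟨∑ i, l i • v i, ⟨v, hv, rfl⟩, by simp only [map_sum, map_smul, hvw]⟩

end combSlices

theorem WeakDual.dist_le_of_mem_closure {𝕜 V : Type*} [NontriviallyNormedField 𝕜]
    [SeminormedAddCommGroup V] [NormedSpace 𝕜 V] {s : Set (WeakDual 𝕜 V)} {d : ℝ}
    (hs : ∀ a ∈ s, ∀ b ∈ s, dist (toStrongDual a) (toStrongDual b) ≤ d)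
    {a b : WeakDual 𝕜 V} (ha : a ∈ closure s) (hb : b ∈ closure s) :
    dist (toStrongDual a) (toStrongDual b) ≤ d := by
  have hclosure : ∀ c, (∀ a ∈ s, dist (toStrongDual a) c ≤ d) →
      ∀ a ∈ closure s, dist (toStrongDual a) c ≤ d := fun c hc =>
    closure_minimal (t := toStrongDual ⁻¹' closedBall c d) hc (isClosed_closedBall c d)
  refine hclosure _ (fun a' ha' => ?_) a ha
  rw [dist_comm]
  exact hclosure _ (fun b' hb' => hs b' hb' a' ha') b hb

section Bidual

variable {X : Type*} [NormedAddCommGroup X] [NormedSpace ℝ X] {n : ℕ} {l : Fin n → ℝ}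

theorem isometry_inclusionInDoubleDual : Isometry (inclusionInDoubleDual ℝ X) :=
  (inclusionInDoubleDualLi ℝ).isometry

theorem mapsTo_inclusionInDoubleDual_ballSlice (f : StrongDual ℝ X) (α : ℝ) :
    MapsTo (inclusionInDoubleDual ℝ X) (ballSlice X f α) (wstarSlice (StrongDual ℝ X) f α) :=
  fun x hx => ⟨mem_closedBall_zero_iff.2 <|
    ((inclusionInDoubleDualLi ℝ (E := X)).norm_map x).trans_le (mem_closedBall_zero_iff.1 hx.1),
    hx.2⟩

theorem mapsTo_inclusionInDoubleDual_combSlices (f : Fin n → StrongDual ℝ X) (α : Fin n → ℝ) :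
    MapsTo (inclusionInDoubleDual ℝ X) (combSlices l fun i => ballSlice X (f i) (α i))
      (combSlices l fun i => wstarSlice (StrongDual ℝ X) (f i) (α i)) := by
  rintro _ ⟨v, hv, rfl⟩
  refine ⟨fun i => inclusionInDoubleDual ℝ X (v i),
    fun i => mapsTo_inclusionInDoubleDual_ballSlice _ _ (hv i), ?_⟩
  simp only [map_sum, map_smul]

theorem toWeakDual_mem_closure_inclusionInWeakDoubleDual_ballSlice {f : StrongDual ℝ X}
    {α : ℝ} {F : StrongDual ℝ (StrongDual ℝ X)} (hF : F ∈ wstarSlice (StrongDual ℝ X) f α) :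
    StrongDual.toWeakDual F ∈ closure (inclusionInWeakDoubleDual X '' ballSlice X f α) := by
  have hopen : IsOpen {G : WeakDual ℝ (StrongDual ℝ X) | 1 - α < G f} :=
    isOpen_lt continuous_const (WeakDual.eval_continuous f)
  have hball := toWeakDual_mem_closure_inclusionInWeakDoubleDual_closedBall
    (by simpa using hF.1 : ‖F‖ ≤ 1)
  refine closure_mono ?_ (hopen.inter_closure ⟨hF.2, hball⟩)
  rintro _ ⟨hG, x, hx, rfl⟩
  exact ⟨x, ⟨hx, hG⟩, rfl⟩

theorem toWeakDual_mem_closure_inclusionInWeakDoubleDual_combSlices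
    {f : Fin n → StrongDual ℝ X} {α : Fin n → ℝ} {F : StrongDual ℝ (StrongDual ℝ X)}
    (hF : F ∈ combSlices l fun i => wstarSlice (StrongDual ℝ X) (f i) (α i)) :
    StrongDual.toWeakDual F ∈
      closure (inclusionInWeakDoubleDual X '' combSlices l fun i => ballSlice X (f i) (α i)) := by
  obtain ⟨v, hv, rfl⟩ := hF
  rw [map_sum]
  simp_rw [map_smul]
  exact sum_smul_mem_closure_image_combSlices _
    fun i => toWeakDual_mem_closure_inclusionInWeakDoubleDual_ballSlice (hv i)

theorem diam_combSlices_wstarSlice (hl : ∀ i, 0 ≤ l i) (hsum : ∑ i, l i = 1)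
    (f : Fin n → StrongDual ℝ X) (α : Fin n → ℝ) :
    diam (combSlices l fun i => wstarSlice (StrongDual ℝ X) (f i) (α i)) =
      diam (combSlices l fun i => ballSlice X (f i) (α i)) := by
  set combX := combSlices l fun i => ballSlice X (f i) (α i)
  set combW := combSlices l fun i => wstarSlice (StrongDual ℝ X) (f i) (α i)
  have hbddX : Bornology.IsBounded combX := isBounded_closedBall.subset <|
    combSlices_subset_of_convex (convex_closedBall 0 1) hl hsum fun i _ hx => hx.1
  have hbddW : Bornology.IsBounded combW := isBounded_closedBall.subset <|
    combSlices_subset_of_convex (convex_closedBall 0 1) hl hsum fun i _ hF => hF.1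
  refine le_antisymm (diam_le_of_forall_dist_le diam_nonneg fun F hF G hG => ?_) ?_
  · refine WeakDual.dist_le_of_mem_closure ?_
      (toWeakDual_mem_closure_inclusionInWeakDoubleDual_combSlices hF)
      (toWeakDual_mem_closure_inclusionInWeakDoubleDual_combSlices hG)
    rintro _ ⟨x, hx, rfl⟩ _ ⟨y, hy, rfl⟩
    exact (isometry_inclusionInDoubleDual.dist_eq x y).trans_le (dist_le_diam_of_mem hbddX hx hy)
  · rw [← isometry_inclusionInDoubleDual.diam_image combX]
    exact diam_mono (mapsTo_inclusionInDoubleDual_combSlices f α).image_subset hbddW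

end Bidual

theorem bscsp_iff_bidual_wstarBSCSP_general (X : Type*) [NormedAddCommGroup X] [NormedSpace ℝ X] :
    BSCSP X ↔ wstarBSCSP (X →L[ℝ] ℝ) := by
  constructor <;> rintro h ε hε <;> obtain ⟨n, f, α, l, hf, hα, hl, hsum, hdiam⟩ := h ε hε
  · exact ⟨n, f, α, l, hf, hα, hl, hsum, by rwa [diam_combSlices_wstarSlice hl hsum]⟩
  · exact ⟨n, f, α, l, hf, hα, hl, hsum, by rwa [← diam_combSlices_wstarSlice hl hsum]⟩

/-- A Banach space `X` has the Ball Small Combination of Slices Property if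
and only if its bidual `X**` has the weak-star version with respect to `σ(X**, X*)`. -/
theorem bscsp_iff_bidual_wstarBSCSP (X : Type*) [NormedAddCommGroup X] [NormedSpace ℝ X]
    [CompleteSpace X] :
    BSCSP X ↔ wstarBSCSP (X →L[ℝ] ℝ) :=
  bscsp_iff_bidual_wstarBSCSP_general X
end
end

section
/- Let X and Y be real Banach spaces, let Z = X ⊕_p Y with 1 ≤ p < ∞, let ε > 0, and let S(B_X, x*, α) be a slice of B_X with x* of norm one and α > 0. Then there exist a norm-one functional z* ∈ Z* and μ > 0 such that the slice S(B_Z, z*, μ) of B_Z is contained in S(B_X, x*, α) × εB_Y, i.e., every (x, y) ∈ S(B_Z, z*, μ) satisfies x ∈ S(B_X, x*, α) and ‖y‖ ≤ ε. -/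
open Metric Topology
open scoped ENNReal

noncomputable section

/-! The functional `z ↦ f z.1` has norm one on `X ⊕_p Y`. If `(x, y)` lies in its `μ`-slice,
then `‖x‖ ≥ f x > 1 - μ` while `‖x‖^p + ‖y‖^p ≤ 1`, so Bernoulli's inequality
`(1 - μ)^p ≥ 1 - pμ` gives `‖y‖^p ≤ pμ`; taking `μ ≤ min(α, ε^p / p)` does it. -/

theorem Real.rpow_le_mul_of_rpow_add_rpow_le_one {q a b μ : ℝ} (hq : 1 ≤ q) (hμ : μ ≤ 1)
    (ha : 1 - μ ≤ a) (hab : a ^ q + b ^ q ≤ 1) : b ^ q ≤ q * μ := by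
  have bernoulli : 1 - q * μ ≤ (1 - μ) ^ q := by
    simpa [sub_eq_add_neg] using one_add_mul_self_le_rpow_one_add (s := -μ) (by linarith) hq
  have hpow : (1 - μ) ^ q ≤ a ^ q := Real.rpow_le_rpow (by linarith) ha (by linarith)
  linarith

namespace WithLp

variable {p : ℝ≥0∞} [Fact (1 ≤ p)] {𝕜 α β F : Type*} [NontriviallyNormedField 𝕜]
  [SeminormedAddCommGroup α] [NormedSpace 𝕜 α] [SeminormedAddCommGroup β] [NormedSpace 𝕜 β]
  [SeminormedAddCommGroup F] [NormedSpace 𝕜 F]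

theorem prod_norm_rpow_eq_add (hp : p ≠ ⊤) (z : WithLp p (α × β)) :
    ‖z‖ ^ p.toReal = ‖z.fst‖ ^ p.toReal + ‖z.snd‖ ^ p.toReal := by
  have hp0 : 0 < p.toReal := ENNReal.toReal_pos (zero_lt_one.trans_le Fact.out).ne' hp
  rw [prod_norm_eq_add hp0, ← Real.rpow_mul (by positivity), one_div_mul_cancel hp0.ne',
    Real.rpow_one]

theorem opNorm_comp_fstL (f : α →L[𝕜] F) : ‖f.comp (fstL p 𝕜 α β)‖ = ‖f‖ := by
  apply le_antisymm
  · refine ContinuousLinearMap.opNorm_le_bound _ (norm_nonneg f) fun z => ?_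
    exact (f.le_opNorm z.fst).trans (by gcongr; exact norm_fst_le _ z)
  · refine ContinuousLinearMap.opNorm_le_bound _ (norm_nonneg _) fun x => ?_
    simpa using (f.comp (fstL p 𝕜 α β)).le_opNorm (toLp p (x, (0 : β)))

end WithLp

section Slices

variable {X Y : Type*} [NormedAddCommGroup X] [NormedSpace ℝ X]
  [NormedAddCommGroup Y] [NormedSpace ℝ Y] {p : ℝ≥0∞} [Fact (1 ≤ p)]

theorem ballSlice_mono {f : X →L[ℝ] ℝ} {μ α : ℝ} (h : μ ≤ α) :
    ballSlice X f μ ⊆ ballSlice X f α :=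
  fun _ ⟨hx, hfx⟩ => ⟨hx, by linarith⟩

theorem fst_mem_ballSlice_of_mem_ballSlice_comp_fstL {f : X →L[ℝ] ℝ} {μ : ℝ}
    {z : WithLp p (X × Y)} (hz : z ∈ ballSlice _ (f.comp (WithLp.fstL p ℝ X Y)) μ) :
    z.fst ∈ ballSlice X f μ := by
  obtain ⟨hz, hfz⟩ := hz
  rw [mem_closedBall_zero_iff] at hz
  exact ⟨mem_closedBall_zero_iff.mpr ((WithLp.norm_fst_le _ z).trans hz), hfz⟩

theorem rpow_norm_snd_le_of_mem_ballSlice_comp_fstL (hp : p ≠ ⊤) {f : X →L[ℝ] ℝ}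
    (hf : ‖f‖ ≤ 1) {μ : ℝ} (hμ : μ ≤ 1) {z : WithLp p (X × Y)}
    (hz : z ∈ ballSlice _ (f.comp (WithLp.fstL p ℝ X Y)) μ) :
    ‖z.snd‖ ^ p.toReal ≤ p.toReal * μ := by
  obtain ⟨hz, hfz⟩ := hz
  rw [mem_closedBall_zero_iff] at hz
  have hp1 : 1 ≤ p.toReal := by
    simpa using ENNReal.toReal_mono hp (Fact.out : 1 ≤ p)
  have hfst : 1 - μ ≤ ‖z.fst‖ := calc
    1 - μ ≤ f z.fst := hfz.le
    _ ≤ ‖f z.fst‖ := le_abs_self _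
    _ ≤ 1 * ‖z.fst‖ := f.le_of_opNorm_le hf _
    _ = ‖z.fst‖ := one_mul _
  refine Real.rpow_le_mul_of_rpow_add_rpow_le_one hp1 hμ hfst ?_
  rw [← WithLp.prod_norm_rpow_eq_add hp]
  exact Real.rpow_le_one (norm_nonneg z) hz (by linarith)

end Slices

theorem slice_subset_slice_prod_lp_general (X Y : Type*)
    [NormedAddCommGroup X] [NormedSpace ℝ X]
    [NormedAddCommGroup Y] [NormedSpace ℝ Y]
    (p : ℝ≥0∞) [Fact (1 ≤ p)] (hp : p ≠ ⊤)
    (ε : ℝ) (hε : 0 < ε) (f : X →L[ℝ] ℝ) (hf : ‖f‖ = 1) (α : ℝ) (hα : 0 < α) :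
    ∃ (g : WithLp p (X × Y) →L[ℝ] ℝ) (μ : ℝ), ‖g‖ = 1 ∧ 0 < μ ∧
      ∀ z ∈ ballSlice (WithLp p (X × Y)) g μ,
        (WithLp.equiv p (X × Y) z).1 ∈ ballSlice X f α ∧
        ‖(WithLp.equiv p (X × Y) z).2‖ ≤ ε := by
  have hq : 0 < p.toReal := ENNReal.toReal_pos (zero_lt_one.trans_le Fact.out).ne' hp
  set μ := min (min α 1) (ε ^ p.toReal / p.toReal)
  have hμα : μ ≤ α := (min_le_left _ _).trans (min_le_left _ _)
  have hμ1 : μ ≤ 1 := (min_le_left _ _).trans (min_le_right _ _)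
  have hμε : p.toReal * μ ≤ ε ^ p.toReal := (le_div_iff₀' hq).mp (min_le_right _ _)
  refine ⟨f.comp (WithLp.fstL p ℝ X Y), μ, (WithLp.opNorm_comp_fstL f).trans hf, by positivity,
    fun z hz => ⟨ballSlice_mono hμα (fst_mem_ballSlice_of_mem_ballSlice_comp_fstL hz), ?_⟩⟩
  have hsnd := rpow_norm_snd_le_of_mem_ballSlice_comp_fstL hp hf.le hμ1 hz
  exact (Real.rpow_le_rpow_iff (norm_nonneg _) hε.le hq).mp (hsnd.trans hμε)

/-- In `Z = X ⊕_p Y` (`1 ≤ p < ∞`), for every slice `S(B_X, x*, α)` of `B_X`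
and every `ε > 0` there is a slice `S(B_Z, z*, μ)` of `B_Z` contained in
`S(B_X, x*, α) × ε B_Y`. -/
theorem slice_subset_slice_prod_lp (X Y : Type*)
    [NormedAddCommGroup X] [NormedSpace ℝ X] [CompleteSpace X]
    [NormedAddCommGroup Y] [NormedSpace ℝ Y] [CompleteSpace Y]
    (p : ℝ≥0∞) [Fact (1 ≤ p)] (hp : p ≠ ⊤)
    (ε : ℝ) (hε : 0 < ε) (f : X →L[ℝ] ℝ) (hf : ‖f‖ = 1) (α : ℝ) (hα : 0 < α) :
    ∃ (g : WithLp p (X × Y) →L[ℝ] ℝ) (μ : ℝ), ‖g‖ = 1 ∧ 0 < μ ∧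
      ∀ z ∈ ballSlice (WithLp p (X × Y)) g μ,
        (WithLp.equiv p (X × Y) z).1 ∈ ballSlice X f α ∧
        ‖(WithLp.equiv p (X × Y) z).2‖ ≤ ε :=
  slice_subset_slice_prod_lp_general X Y p hp ε hε f hf α hα
end
end

section
/- Let X and Y be real Banach spaces. If Z = X ⊕_∞ Y has the Ball Huskable Property (BHP), then both X and Y have BHP. -/
open Metric Topology
open scoped ENNReal

noncomputable section

/-!
Every point `(x₀, y₀)` of the unit ball of `X ⊕_∞ Y` lies on the section `x ↦ (x, y₀)`, an
isometric copy of `X` whose unit ball sits inside the unit ball of the sum. Being a translate of a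
bounded linear map, the section is weak-to-weak continuous, so it pulls a small nonempty relatively
weakly open piece of the ball of the sum back to one of the ball of `X`. Swapping the factors
gives `Y`.
-/

section WeakTopology

variable {X Z : Type*} [NormedAddCommGroup X] [NormedSpace ℝ X]
  [NormedAddCommGroup Z] [NormedSpace ℝ Z]

theorem continuous_weakTopology_iff {α : Type*} (t : TopologicalSpace α) {g : α → Z} :
    Continuous[t, weakTopology Z] g ↔ ∀ f : Z →L[ℝ] ℝ, Continuous[t, _] (fun a => f (g a)) :=
  continuous_iInf_rng.trans (forall_congr' fun _ => continuous_induced_rng)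

theorem ContinuousLinearMap.continuous_weakTopology (f : X →L[ℝ] ℝ) :
    Continuous[weakTopology X, _] f :=
  continuous_iInf_dom continuous_induced_dom

theorem ContinuousLinearMap.continuous_weakTopology_add_const (L : X →L[ℝ] Z) (c : Z) :
    Continuous[weakTopology X, weakTopology Z] (fun x => L x + c) := by
  refine (continuous_weakTopology_iff (weakTopology X)).2 fun f => ?_
  simp only [map_add]
  exact @Continuous.add ℝ _ _ _ X (weakTopology X) _ _
    (f.comp L).continuous_weakTopology (@continuous_const X ℝ (weakTopology X) _ _)

end WeakTopology

section BHP

variable {X Y Z : Type*} [NormedAddCommGroup X] [NormedSpace ℝ X]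
  [NormedAddCommGroup Y] [NormedSpace ℝ Y] [NormedAddCommGroup Z] [NormedSpace ℝ Z]

theorem BHP.of_forall_mem_image (hZ : BHP Z)
    (hsec : ∀ z ∈ closedBall (0 : Z) 1, ∃ t : X → Z,
      Continuous[weakTopology X, weakTopology Z] t ∧ (∀ a b, dist a b ≤ dist (t a) (t b)) ∧
      Set.MapsTo t (closedBall 0 1) (closedBall 0 1) ∧ z ∈ t '' closedBall 0 1) :
    BHP X := by
  intro ε hε
  obtain ⟨U, hU, ⟨z, hzU, hzB⟩, hdiam⟩ := hZ ε hε
  obtain ⟨t, ht, hdist, hmaps, x, hxB, rfl⟩ := hsec z hzB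
  refine ⟨t ⁻¹' U, @Continuous.isOpen_preimage _ _ (weakTopology X) (weakTopology Z) t ht U hU,
    ⟨x, hzU, hxB⟩, ?_⟩
  refine (diam_le_of_forall_dist_le diam_nonneg fun a ha b hb => ?_).trans_lt hdiam
  exact (hdist a b).trans <|
    dist_le_diam_of_mem (isBounded_closedBall.subset Set.inter_subset_right)
      ⟨ha.1, hmaps ha.2⟩ ⟨hb.1, hmaps hb.2⟩

theorem BHP.of_linearIsometryEquiv (e : X ≃ₗᵢ[ℝ] Z) (hX : BHP X) : BHP Z := by
  refine hX.of_forall_mem_image fun z hz => ⟨e.symm, ?_, fun a b => ?_, fun w hw => ?_, ?_⟩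
  · exact (continuous_weakTopology_iff _).2 fun f =>
      (f.comp (e.symm.toContinuousLinearEquiv : Z →L[ℝ] X)).continuous_weakTopology
  · rw [e.symm.dist_map]
  · simpa only [mem_closedBall_zero_iff, e.symm.norm_map] using hw
  · exact ⟨e z, by simpa only [mem_closedBall_zero_iff, e.norm_map] using hz, e.symm_apply_apply z⟩

theorem BHP.of_withLpProd_infty (h : BHP (WithLp ⊤ (X × Y))) : BHP X := by
  refine h.of_forall_mem_image fun z hz => ?_
  have hz' : ‖z.fst‖ ≤ 1 ∧ ‖z.snd‖ ≤ 1 := by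
    simpa only [mem_closedBall_zero_iff, WithLp.prod_norm_eq_sup, sup_le_iff] using hz
  refine ⟨fun x => WithLp.toLp ⊤ (x, z.snd), ?_, fun a b => ?_, fun x hx => ?_,
    z.fst, mem_closedBall_zero_iff.2 hz'.1, rfl⟩
  · let L : X →L[ℝ] WithLp ⊤ (X × Y) :=
      (WithLp.prodContinuousLinearEquiv ⊤ ℝ X Y).symm.toContinuousLinearMap ∘L
        ContinuousLinearMap.inl ℝ X Y
    have h_affine :
        (fun x : X => WithLp.toLp ⊤ (x, z.snd)) = fun x => L x + WithLp.toLp ⊤ (0, z.snd) :=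
      funext fun x => by
        simp only [L, ContinuousLinearMap.comp_apply, ContinuousLinearEquiv.coe_coe,
          WithLp.prodContinuousLinearEquiv_symm_apply, ContinuousLinearMap.inl_apply,
          ← WithLp.toLp_add, Prod.mk_add_mk, add_zero, zero_add]
    rw [h_affine]
    exact L.continuous_weakTopology_add_const _
  · rw [WithLp.prod_dist_eq_sup]
    exact le_sup_left
  · simpa only [mem_closedBall_zero_iff, WithLp.prod_norm_eq_sup, sup_le_iff] using
      ⟨mem_closedBall_zero_iff.1 hx, hz'.2⟩

end BHP

theorem bhp_prod_linf_general (X Y : Type*)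
    [NormedAddCommGroup X] [NormedSpace ℝ X]
    [NormedAddCommGroup Y] [NormedSpace ℝ Y]
    (h : BHP (WithLp ⊤ (X × Y))) :
    BHP X ∧ BHP Y :=
  ⟨h.of_withLpProd_infty,
    (h.of_linearIsometryEquiv (LinearIsometryEquiv.withLpProdComm ⊤ ℝ X Y)).of_withLpProd_infty⟩

/-- If `Z = X ⊕_∞ Y` has the Ball Huskable Property, then both `X` and `Y`
have it. -/
theorem bhp_prod_linf (X Y : Type*)
    [NormedAddCommGroup X] [NormedSpace ℝ X] [CompleteSpace X]
    [NormedAddCommGroup Y] [NormedSpace ℝ Y] [CompleteSpace Y]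
    (h : BHP (WithLp ⊤ (X × Y))) :
    BHP X ∧ BHP Y :=
  bhp_prod_linf_general X Y h
end
end

section
/- Let X be a real Banach space and let Y ⊆ X be an M-ideal in X. If X has the Ball Huskable Property (BHP), then Y has BHP. -/
open Metric Topology
open scoped ENNReal

noncomputable section

/-!
An M-ideal satisfies a strengthened ball property: the points `x + yᵢ` (`‖x‖ ≤ 1`, `yᵢ ∈ B_Y`)
have a common almost-centre `z ∈ Y`, i.e. `‖x + yᵢ - z‖ < 1 + ε`, at which finitely many
functionals `P f` take almost the same values as at `x`. This comes from Hahn–Banach separation: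
a separating functional vanishing on the relevant copy of `Y` is bounded, through the
L-decomposition `‖f‖ = ‖P f‖ + ‖f - P f‖`, by the quantity it must exceed.

Given a relatively weakly open piece of `B_X` of small diameter around `x₀`, take the relatively
weakly open set `U ⊆ Y` on which the `P f` (for the finitely many `f` defining a neighbourhood of
`x₀`) are close to their values at `x₀`. For `y₁, y₂ ∈ U ∩ B_Y`, the points
`(x₀ + yᵢ - z) / (1 + ε)` lie in that piece, because `f` and `P f` agree on `Y`; hence
`‖y₁ - y₂‖` is at most `(1 + ε)` times its diameter. The ball property for the single point `0`
shows that `U ∩ B_Y` is nonempty.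
-/

open Filter
open scoped Pointwise

section WeakTopology

variable {Z : Type*} [NormedAddCommGroup Z] [NormedSpace ℝ Z]

theorem continuous_weakTopology_apply (g : Z →L[ℝ] ℝ) :
    Continuous[weakTopology Z, _] g :=
  continuous_iInf_dom continuous_induced_dom

theorem isOpen_weakTopology_setOf_forall_abs_sub_lt {ι : Type*} (I : Finset ι)
    (g : ι → Z →L[ℝ] ℝ) (a : ι → ℝ) (r : ℝ) :
    IsOpen[weakTopology Z] {z | ∀ i ∈ I, |g i z - a i| < r} := by
  let := weakTopology Z
  simp only [Set.ofPred_forall]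
  exact isOpen_biInter_finset fun i _ =>
    isOpen_lt (continuous_abs.comp ((continuous_weakTopology_apply (g i)).sub continuous_const))
      continuous_const

theorem exists_finset_of_isOpen_weakTopology {W : Set Z} (hW : IsOpen[weakTopology Z] W)
    {x : Z} (hx : x ∈ W) :
    ∃ I : Finset (Z →L[ℝ] ℝ), ∃ δ > 0, ∀ z, (∀ f ∈ I, |f z - f x| < δ) → z ∈ W := by
  have hnhds : @nhds Z (weakTopology Z) x = ⨅ f : Z →L[ℝ] ℝ, comap f (𝓝 (f x)) := by
    rw [weakTopology, nhds_iInf]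
    simp only [nhds_induced]
  have hWx : W ∈ @nhds Z (weakTopology Z) x := @IsOpen.mem_nhds _ (weakTopology Z) _ _ hW hx
  rw [hnhds, mem_iInf_finite] at hWx
  obtain ⟨I, V, hV, rfl⟩ := hWx.imp fun I h => mem_iInf_finset.1 h
  choose! r hr hrV using fun (f : Z →L[ℝ] ℝ) hf =>
    (Metric.nhds_basis_ball.comap (f : Z → ℝ)).mem_iff.1 (hV f hf)
  have hsmall : ∀ᶠ δ in 𝓝[>] 0, ∀ f ∈ I, δ < r f :=
    (eventually_all_finset I).2 fun f hf => nhdsWithin_le_nhds (eventually_lt_nhds (hr f hf))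
  obtain ⟨δ, hδr, hδ⟩ := (hsmall.and self_mem_nhdsWithin).exists
  refine ⟨I, δ, hδ, fun z hz => Set.mem_biInter fun f hf => hrV f hf ?_⟩
  exact (hz f hf).trans (hδr f hf)

end WeakTopology

section Functional

variable {E : Type*} [NormedAddCommGroup E] [NormedSpace ℝ E]

theorem exists_norm_lt_and_norm_le_apply (f : E →L[ℝ] ℝ) {r : ℝ} (hr : 1 < r) :
    ∃ w : E, ‖w‖ < r ∧ ‖f‖ ≤ f w := by
  rcases (norm_nonneg f).eq_or_lt with hf | hf
  · exact ⟨0, by simpa using zero_lt_one.trans hr, by simp [← hf]⟩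
  obtain ⟨u, hu, hfu⟩ := f.exists_lt_apply_of_lt_opNorm (div_lt_self hf hr)
  have hr₀ : 0 < r := zero_lt_one.trans hr
  have hnorm : ∀ c : ℝ, |c| = r → ‖c • u‖ < r := fun c hc => by
    rw [norm_smul, Real.norm_eq_abs, hc]
    exact mul_lt_of_lt_one_right hr₀ hu
  rw [div_lt_iff₀ hr₀, Real.norm_eq_abs] at hfu
  rcases abs_cases (f u) with ⟨hu', -⟩ | ⟨hu', -⟩ <;> rw [hu'] at hfu
  · exact ⟨r • u, hnorm r (abs_of_pos hr₀), by rw [map_smul, smul_eq_mul]; linarith⟩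
  · exact ⟨(-r) • u, hnorm (-r) (by simp [abs_of_pos hr₀]), by
      rw [map_smul, smul_eq_mul]; linarith⟩

theorem ContinuousLinearMap.apply_le_norm_of_norm_le_one (f : E →L[ℝ] ℝ) {x : E}
    (hx : ‖x‖ ≤ 1) : f x ≤ ‖f‖ :=
  (Real.le_norm_self _).trans (by simpa using f.le_opNorm_of_le hx)

theorem abs_apply_inv_smul_sub_apply_le (f : E →L[ℝ] ℝ) {v : E} {η : ℝ} (hη : 0 ≤ η)
    (hv : ‖v‖ ≤ 1 + η) : |f ((1 + η)⁻¹ • v) - f v| ≤ η * ‖f‖ := by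
  have h₁ : 0 < 1 + η := by linarith
  have : f ((1 + η)⁻¹ • v) - f v = -(η / (1 + η)) * f v := by
    rw [map_smul, smul_eq_mul]; field_simp; ring
  rw [this, abs_mul, abs_neg, abs_of_nonneg (by positivity)]
  calc η / (1 + η) * |f v| ≤ η / (1 + η) * (‖f‖ * (1 + η)) := by
        gcongr; exact (f.le_opNorm v).trans (by gcongr)
    _ = η * ‖f‖ := by field_simp

theorem norm_inv_smul_le_one {v : E} {η : ℝ} (hη : 0 ≤ η) (hv : ‖v‖ ≤ 1 + η) :
    ‖(1 + η)⁻¹ • v‖ ≤ 1 := by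
  rw [norm_smul, norm_inv, Real.norm_of_nonneg (by linarith)]
  exact inv_mul_le_one_of_le₀ hv (by linarith)

end Functional

theorem LinearMap.eq_zero_of_forall_mem_lt {E : Type*} [AddCommGroup E] [Module ℝ E]
    (φ : E →ₗ[ℝ] ℝ) {M : Submodule ℝ E} {C : ℝ} (h : ∀ z ∈ M, φ z < C) : ∀ z ∈ M, φ z = 0 := by
  intro z hz
  by_contra hne
  have := h _ (M.smul_mem (C / φ z) hz)
  rw [map_smul, smul_eq_mul, div_mul_cancel₀ _ hne] at this
  exact this.false

theorem eventually_forall_mul_lt {α : Type*} (s : Finset α) (a : α → ℝ) {c : ℝ} (hc : 0 < c) :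
    ∀ᶠ η in 𝓝[>] 0, ∀ i ∈ s, η * a i < c :=
  (eventually_all_finset s).2 fun i _ => nhdsWithin_le_nhds <|
    (tendsto_id.mul_const (a i)).eventually_lt_const (by simpa using hc)

theorem ContinuousLinearMap.apply_eq_sum_apply_single {ι κ E : Type*} [Fintype ι] [Fintype κ]
    [DecidableEq ι] [DecidableEq κ] [NormedAddCommGroup E] [NormedSpace ℝ E]
    (Φ : (ι → E) × (κ → ℝ) →L[ℝ] ℝ) (ξ : ι → E) (t : κ → ℝ) :
    Φ (ξ, t) = ∑ i, Φ (Pi.single i (ξ i), 0) + ∑ k, Φ (0, Pi.single k 1) * t k := by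
  rw [← Φ.comp_inl_add_comp_inr]
  congr 1
  · conv_lhs => rw [← Finset.univ_sum_single ξ, map_sum]
    rfl
  · rw [← ContinuousLinearMap.coe_coe, LinearMap.pi_apply_eq_sum_univ]
    refine Finset.sum_congr rfl fun k _ => ?_
    change t k * Φ (0, fun j => if k = j then 1 else 0) = _
    rw [mul_comm]
    congr 3
    ext j
    simp [Pi.single_apply, eq_comm]

structure IsMIdealProjection {X : Type*} [NormedAddCommGroup X] [NormedSpace ℝ X]
    (Y : Subspace ℝ X) (P : (X →L[ℝ] ℝ) →L[ℝ] (X →L[ℝ] ℝ)) : Prop where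
  idempotent : ∀ f, P (P f) = P f
  norm_eq : ∀ f, ‖f‖ = ‖P f‖ + ‖f - P f‖
  map_eq_zero_iff : ∀ f, P f = 0 ↔ ∀ y ∈ Y, f y = 0

namespace IsMIdealProjection

variable {X : Type*} [NormedAddCommGroup X] [NormedSpace ℝ X] {Y : Subspace ℝ X}
  {P : (X →L[ℝ] ℝ) →L[ℝ] (X →L[ℝ] ℝ)} (hP : IsMIdealProjection Y P)
include hP

theorem map_eq_map_of_eqOn {f g : X →L[ℝ] ℝ} (h : ∀ y ∈ Y, f y = g y) : P f = P g := by
  rw [← sub_eq_zero, ← map_sub, hP.map_eq_zero_iff]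
  intro y hy
  simp [h y hy]

theorem apply_of_mem (f : X →L[ℝ] ℝ) {y : X} (hy : y ∈ Y) : P f y = f y := by
  have h := (hP.map_eq_zero_iff (f - P f)).1 (by rw [map_sub, hP.idempotent, sub_self]) y hy
  rw [sub_apply, sub_eq_zero] at h
  exact h.symm

theorem norm_map_le (f : X →L[ℝ] ℝ) : ‖P f‖ ≤ ‖f‖ := by
  linarith [hP.norm_eq f, norm_nonneg (f - P f)]

theorem apply_add_sub_map_apply_le (f : X →L[ℝ] ℝ) {x y : X} (hx : ‖x‖ ≤ 1) (hy : y ∈ Y)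
    (hy₁ : ‖y‖ ≤ 1) : f (x + y) - P f x ≤ ‖f‖ :=
  calc f (x + y) - P f x = (f - P f) x + P f y := by
        rw [hP.apply_of_mem f hy, map_add, sub_apply]; ring
    _ ≤ ‖f - P f‖ + ‖P f‖ :=
        add_le_add ((f - P f).apply_le_norm_of_norm_le_one hx)
          ((P f).apply_le_norm_of_norm_le_one hy₁)
    _ = ‖f‖ := by rw [hP.norm_eq f, add_comm]

theorem neg_map_apply_le (f : X →L[ℝ] ℝ) {x : X} (hx : ‖x‖ ≤ 1) : -P f x ≤ ‖f‖ := by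
  have := (-P f).apply_le_norm_of_norm_le_one hx
  rw [norm_neg, neg_apply] at this
  exact this.trans (hP.norm_map_le f)

theorem sum_apply_add_sum_le {ι κ : Type*} [Fintype ι] [Fintype κ] (x : X) (v : ι → X)
    (hv : ∀ i f, f (v i) - P f x ≤ ‖f‖) (f : ι → X →L[ℝ] ℝ) (g : κ → X →L[ℝ] ℝ) (c : κ → ℝ)
    (hfg : ∀ y ∈ Y, ∑ i, f i y + ∑ k, c k * P (g k) y = 0) :
    ∑ i, f i (v i) + ∑ k, c k * P (g k) x ≤ ∑ i, ‖f i‖ := by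
  let G : X →L[ℝ] ℝ := ∑ k, c k • P (g k)
  have hPf : P (∑ i, f i) = -G := by
    rw [hP.map_eq_map_of_eqOn (g := -G) fun y hy => ?_]
    · simp only [G, map_neg, map_sum, map_smul, hP.idempotent]
    simp only [G, sum_apply, neg_apply, smul_apply, smul_eq_mul]
    linarith [hfg y hy]
  have hx := congrArg (fun φ => φ x) hPf
  simp only [G, map_sum, sum_apply, neg_apply, smul_apply, smul_eq_mul] at hx
  calc ∑ i, f i (v i) + ∑ k, c k * P (g k) x = ∑ i, (f i (v i) - P (f i) x) := by
        rw [Finset.sum_sub_distrib, hx, sub_neg_eq_add]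
    _ ≤ ∑ i, ‖f i‖ := Finset.sum_le_sum fun i _ => hv i (f i)

theorem exists_mem_forall_norm_sub_lt {ι : Type*} [Fintype ι] (x : X) (v : ι → X)
    (hv : ∀ i f, f (v i) - P f x ≤ ‖f‖) (s : Finset (X →L[ℝ] ℝ)) {ε ε' : ℝ} (hε : 0 < ε)
    (hε' : 0 < ε') :
    ∃ z ∈ Y, (∀ i, ‖v i - z‖ < 1 + ε) ∧ ∀ f ∈ s, |P f z - P f x| < ε' := by
  classical
  by_contra! hfar
  let L : X →L[ℝ] (ι → X) × (s → ℝ) :=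
    (ContinuousLinearMap.pi fun _ => .id ℝ X).prod (ContinuousLinearMap.pi fun f : s => P f)
  let B : Set ((ι → X) × (s → ℝ)) := ball 0 (1 + ε) ×ˢ ball 0 ε'
  let a : (ι → X) × (s → ℝ) := (v, fun f => P f x)
  have haB : a ∉ B + L '' Y := by
    rintro ⟨b, ⟨hb₁, hb₂⟩, _, ⟨z, hz, rfl⟩, hab⟩
    obtain rfl : b = a - L z := eq_sub_of_add_eq hab
    obtain ⟨f, hf, hfz⟩ :=
      hfar z hz fun i => (pi_norm_lt_iff (by linarith)).1 (mem_ball_zero_iff.1 hb₁) i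
    have : |P f x - P f z| < ε' := (pi_norm_lt_iff hε').1 (mem_ball_zero_iff.1 hb₂) ⟨f, hf⟩
    exact hfz.not_gt (abs_sub_comm (P f x) _ ▸ this)
  obtain ⟨Φ, hΦ⟩ := geometric_hahn_banach_open_point
    (((convex_ball _ _).prod (convex_ball _ _)).add (Y.convex.linear_image L.toLinearMap))
    ((isOpen_ball.prod isOpen_ball).add_right) haB
  have hsep : ∀ b ∈ B, ∀ z ∈ Y, Φ b + Φ (L z) < Φ a := fun b hb z hz => by
    simpa using hΦ (b + L z) (Set.add_mem_add hb ⟨z, hz, rfl⟩)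
  have hΦL : ∀ z ∈ Y, Φ (L z) = 0 := (Φ.toLinearMap ∘ₗ L.toLinearMap).eq_zero_of_forall_mem_lt
    fun z hz => by simpa using hsep 0 ⟨mem_ball_self (by linarith), mem_ball_self hε'⟩ z hz
  let f : ι → X →L[ℝ] ℝ := fun i => Φ ∘L .inl ℝ _ _ ∘L .single ℝ (fun _ => X) i
  have ha : Φ a ≤ ∑ i, ‖f i‖ := by
    rw [Φ.apply_eq_sum_apply_single]
    refine hP.sum_apply_add_sum_le x v hv f Subtype.val _ fun y hy => ?_
    rw [← hΦL y hy, Φ.apply_eq_sum_apply_single]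
    rfl
  choose w hw hfw using fun i =>
    exists_norm_lt_and_norm_le_apply (f i) (lt_add_of_pos_right 1 hε)
  have hwB : ((w, 0) : (ι → X) × (s → ℝ)) ∈ B :=
    ⟨mem_ball_zero_iff.2 ((pi_norm_lt_iff (by linarith)).2 hw), mem_ball_self hε'⟩
  have hwa := hsep _ hwB 0 Y.zero_mem
  rw [map_zero, map_zero, add_zero, Φ.apply_eq_sum_apply_single] at hwa
  simp only [Pi.zero_apply, mul_zero, Finset.sum_const_zero, add_zero] at hwa
  change ∑ i, f i (w i) < Φ a at hwa
  linarith [Finset.sum_le_sum fun i (_ : i ∈ Finset.univ) => hfw i]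

theorem exists_mem_norm_le_one_forall_abs_sub_lt {x : X} (hx : ‖x‖ ≤ 1)
    (s : Finset (X →L[ℝ] ℝ)) {δ : ℝ} (hδ : 0 < δ) :
    ∃ y ∈ Y, ‖y‖ ≤ 1 ∧ ∀ f ∈ s, |P f y - P f x| < δ := by
  obtain ⟨η, hηs, hη⟩ :=
    ((eventually_forall_mul_lt s (fun f => ‖P f‖) (half_pos hδ)).and self_mem_nhdsWithin).exists
  obtain ⟨z, hz, hz₀, hzx⟩ := hP.exists_mem_forall_norm_sub_lt x (fun _ : Unit => 0)
    (fun _ f => by simpa using hP.neg_map_apply_le f hx) s hη (half_pos hδ)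
  have hz₁ : ‖z‖ ≤ 1 + η := by simpa using (hz₀ ()).le
  refine ⟨(1 + η)⁻¹ • z, Y.smul_mem _ hz, norm_inv_smul_le_one hη.le hz₁, fun f hf => ?_⟩
  calc |P f ((1 + η)⁻¹ • z) - P f x|
      ≤ |P f ((1 + η)⁻¹ • z) - P f z| + |P f z - P f x| := abs_sub_le _ _ _
    _ < δ / 2 + δ / 2 := add_lt_add_of_le_of_lt
        ((abs_apply_inv_smul_sub_apply_le _ hη.le hz₁).trans (hηs f hf).le) (hzx f hf)
    _ = δ := add_halves δ

theorem inv_smul_add_mem {W : Set X} {x₀ : X} {I : Finset (X →L[ℝ] ℝ)} {δ : ℝ}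
    (hW : ∀ x, (∀ f ∈ I, |f x - f x₀| < δ) → x ∈ W) {η : ℝ} (hη : 0 ≤ η)
    (hηI : ∀ f ∈ I, η * ‖f‖ < δ / 2) {u : X} (hu : u ∈ Y) (huI : ∀ f ∈ I, |P f u| < δ / 2)
    (hx₀u : ‖x₀ + u‖ ≤ 1 + η) :
    (1 + η)⁻¹ • (x₀ + u) ∈ W ∩ closedBall 0 1 := by
  refine ⟨hW _ fun f hf => ?_, mem_closedBall_zero_iff.2 (norm_inv_smul_le_one hη hx₀u)⟩
  calc |f ((1 + η)⁻¹ • (x₀ + u)) - f x₀|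
      ≤ |f ((1 + η)⁻¹ • (x₀ + u)) - f (x₀ + u)| + |f (x₀ + u) - f x₀| := abs_sub_le _ _ _
    _ < δ / 2 + δ / 2 := by
        refine add_lt_add_of_le_of_lt
          ((abs_apply_inv_smul_sub_apply_le f hη hx₀u).trans (hηI f hf).le) ?_
        rw [map_add, add_sub_cancel_left, ← hP.apply_of_mem f hu]
        exact huI f hf
    _ = δ := add_halves δ

theorem norm_sub_le_diam {W : Set X} {x₀ : X} (hx₀ : ‖x₀‖ ≤ 1) {I : Finset (X →L[ℝ] ℝ)}
    {δ : ℝ} (hδ : 0 < δ) (hW : ∀ x, (∀ f ∈ I, |f x - f x₀| < δ) → x ∈ W) {y₁ y₂ : X}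
    (hy₁ : y₁ ∈ Y) (hy₂ : y₂ ∈ Y) (hy₁₁ : ‖y₁‖ ≤ 1) (hy₂₁ : ‖y₂‖ ≤ 1)
    (hy₁I : ∀ f ∈ I, |P f y₁ - P f x₀| < δ / 4) (hy₂I : ∀ f ∈ I, |P f y₂ - P f x₀| < δ / 4) :
    ‖y₁ - y₂‖ ≤ diam (W ∩ closedBall 0 1) := by
  set d := diam (W ∩ closedBall (0 : X) 1)
  have hd : Tendsto (fun η => (1 + η) * d) (𝓝[>] 0) (𝓝 d) :=
    tendsto_nhdsWithin_of_tendsto_nhds <| by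
      simpa using ((tendsto_id (x := 𝓝 (0 : ℝ))).const_add 1).mul_const d
  refine ge_of_tendsto hd ?_
  filter_upwards [self_mem_nhdsWithin, eventually_forall_mul_lt I (‖·‖) (half_pos hδ)]
    with η (hη : 0 < η) hηI
  obtain ⟨z, hz, hvz, hzI⟩ := hP.exists_mem_forall_norm_sub_lt x₀ ![x₀ + y₁, x₀ + y₂]
    (Fin.forall_fin_two.2 ⟨fun f => hP.apply_add_sub_map_apply_le f hx₀ hy₁ hy₁₁,
      fun f => hP.apply_add_sub_map_apply_le f hx₀ hy₂ hy₂₁⟩) I hη (by positivity : 0 < δ / 4)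
  have hw : ∀ y ∈ Y, (∀ f ∈ I, |P f y - P f x₀| < δ / 4) → ‖x₀ + y - z‖ < 1 + η →
      (1 + η)⁻¹ • (x₀ + (y - z)) ∈ W ∩ closedBall 0 1 := fun y hy hyI hyz =>
    hP.inv_smul_add_mem hW hη.le hηI (Y.sub_mem hy hz) (fun f hf => by
      have := abs_sub_le (P f y) (P f x₀) (P f z)
      rw [abs_sub_comm (P f x₀)] at this
      rw [map_sub]
      linarith [hyI f hf, hzI f hf]) (by rw [← add_sub_assoc]; exact hyz.le)
  have hsub :
      y₁ - y₂ = (1 + η) • ((1 + η)⁻¹ • (x₀ + (y₁ - z)) - (1 + η)⁻¹ • (x₀ + (y₂ - z))) := by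
    rw [← smul_sub, smul_smul, mul_inv_cancel₀ (by positivity), one_smul]
    abel
  rw [hsub, norm_smul, Real.norm_of_nonneg (by positivity), ← dist_eq_norm]
  exact mul_le_mul_of_nonneg_left (dist_le_diam_of_mem
    (isBounded_closedBall.subset Set.inter_subset_right) (hw y₁ hy₁ hy₁I (hvz 0))
    (hw y₂ hy₂ hy₂I (hvz 1))) (by positivity)

end IsMIdealProjection

theorem bhp_of_mIdeal_general (X : Type*) [NormedAddCommGroup X] [NormedSpace ℝ X]
    (Y : Subspace ℝ X) (hY : IsMIdeal Y) (h : BHP X) :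
    BHP Y := by
  obtain ⟨P, hP₁, hP₂, hP₃⟩ := hY
  have hP : IsMIdealProjection Y P := ⟨hP₁, hP₂, hP₃⟩
  intro ε hε
  obtain ⟨W, hW, ⟨x₀, hx₀W, hx₀⟩, hWε⟩ := h ε hε
  rw [mem_closedBall_zero_iff] at hx₀
  obtain ⟨I, δ, hδ, hIW⟩ := exists_finset_of_isOpen_weakTopology hW hx₀W
  refine ⟨{y | ∀ f ∈ I, |(P f).comp Y.subtypeL y - P f x₀| < δ / 4},
    isOpen_weakTopology_setOf_forall_abs_sub_lt I _ _ _, ?_, ?_⟩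
  · obtain ⟨y, hyY, hy, hyI⟩ :=
      hP.exists_mem_norm_le_one_forall_abs_sub_lt hx₀ I (by positivity : 0 < δ / 4)
    exact ⟨⟨y, hyY⟩, hyI, mem_closedBall_zero_iff.2 hy⟩
  · refine (diam_le_of_forall_dist_le diam_nonneg fun y₁ hy₁ y₂ hy₂ => ?_).trans_lt hWε
    rw [Subtype.dist_eq, dist_eq_norm]
    exact hP.norm_sub_le_diam hx₀ hδ hIW y₁.2 y₂.2 (mem_closedBall_zero_iff.1 hy₁.2)
      (mem_closedBall_zero_iff.1 hy₂.2) hy₁.1 hy₂.1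

/-- If `Y` is an M-ideal in the Banach space `X` and `X` has the Ball
Huskable Property, then `Y` has it. -/
theorem bhp_of_mIdeal (X : Type*) [NormedAddCommGroup X] [NormedSpace ℝ X]
    [CompleteSpace X] (Y : Subspace ℝ X) (hYc : IsClosed (Y : Set X))
    (hY : IsMIdeal Y) (h : BHP X) :
    BHP Y :=
  bhp_of_mIdeal_general X Y hY h
end
end

section
/- Let X be a real Banach space and let Y ⊆ X be a strict ideal in X. If Y* has the w*-Ball Huskable Property (w*-BHP), then X* has the w*-BHP. -/
open Metric Topology
open scoped ENNReal

noncomputable section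

/-!
Pull a small relatively weak*-open piece `U` of `B_{Y*}` back along the restriction map
`f ↦ f|_Y`, which is weak*-continuous and maps `B_{X*}` onto `B_{Y*}` by Hahn–Banach. On the
range of the norm-one projection `P` whose kernel is `Y^⊥`, restriction is an isometry, so the
part of the preimage lying in `P(X*)` is no larger than `U`. Since `B_{P(X*)}` is weak*-dense
in `B_{X*}`, the whole preimage lies in the weak*-closure of that part, and weak*-closures do not
increase norm-diameter because norm balls of `X*` are weak*-closed.
-/

section WeakStar

variable {X : Type*} [NormedAddCommGroup X] [NormedSpace ℝ X]

lemma continuous_wstar_eval (x : X) :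
    Continuous[wstarTopology X, inferInstance] (fun f : X →L[ℝ] ℝ => f x) :=
  continuous_iInf_dom continuous_induced_dom

lemma continuous_wstar_comp_subtypeL (Y : Subspace ℝ X) :
    Continuous[wstarTopology X, wstarTopology Y] (fun f : X →L[ℝ] ℝ => f.comp Y.subtypeL) :=
  continuous_iInf_rng.2 fun y => continuous_induced_rng.2 (continuous_wstar_eval (y : X))

lemma isClosed_wstar_closedBall (g : X →L[ℝ] ℝ) (d : ℝ) :
    IsClosed[wstarTopology X] (closedBall g d) := by
  let := wstarTopology X
  rcases lt_or_ge d 0 with hd | hd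
  · rw [closedBall_eq_empty.2 hd]
    exact isClosed_empty
  have hball : closedBall g d = ⋂ x : X, {f | ‖f x - g x‖ ≤ d * ‖x‖} := by
    ext f
    simp only [mem_closedBall, dist_eq_norm, Set.mem_iInter, Set.mem_ofPred_eq,
      ← ContinuousLinearMap.sub_apply']
    exact ContinuousLinearMap.opNorm_le_iff hd
  rw [hball]
  exact isClosed_iInter fun x =>
    isClosed_le ((continuous_wstar_eval x).sub continuous_const).norm continuous_const

lemma wstar_closure_subset_closedBall {S : Set (X →L[ℝ] ℝ)} {g : X →L[ℝ] ℝ} {d : ℝ}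
    (hS : S ⊆ closedBall g d) : closure[wstarTopology X] S ⊆ closedBall g d :=
  letI := wstarTopology X
  (isClosed_wstar_closedBall g d).closure_subset_iff.2 hS

lemma diam_le_of_subset_wstar_closure {S T : Set (X →L[ℝ] ℝ)} (hS : Bornology.IsBounded S)
    (hT : T ⊆ closure[wstarTopology X] S) : diam T ≤ diam S := by
  refine diam_le_of_forall_dist_le diam_nonneg fun f₁ hf₁ f₂ hf₂ => ?_
  have hSf₁ : S ⊆ closedBall f₁ (diam S) := fun g hg =>
    mem_closedBall_comm.1 <| wstar_closure_subset_closedBall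
      (fun g' hg' => dist_le_diam_of_mem hS hg' hg) (hT hf₁)
  exact mem_closedBall'.1 (wstar_closure_subset_closedBall hSf₁ (hT hf₂))

end WeakStar

section Restriction

variable {X : Type*} [NormedAddCommGroup X] [NormedSpace ℝ X] (Y : Subspace ℝ X)

lemma norm_comp_subtypeL_le (f : X →L[ℝ] ℝ) : ‖f.comp Y.subtypeL‖ ≤ ‖f‖ :=
  (f.opNorm_comp_le _).trans (mul_le_of_le_one_right (norm_nonneg f) Y.norm_subtypeL_le)

lemma image_comp_subtypeL_closedBall (r : ℝ) :
    (fun f : X →L[ℝ] ℝ => f.comp Y.subtypeL) '' closedBall 0 r = closedBall 0 r := by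
  refine Set.Subset.antisymm ?_ fun g hg => ?_
  · rintro _ ⟨f, hf, rfl⟩
    exact (mem_closedBall_zero_iff (E := Y →L[ℝ] ℝ)).2
      ((norm_comp_subtypeL_le Y f).trans (mem_closedBall_zero_iff.1 hf))
  · obtain ⟨f, hfg, hf⟩ := exists_extension_norm_eq Y g
    have hgr : ‖g‖ ≤ r := (mem_closedBall_zero_iff (E := Y →L[ℝ] ℝ)).1 hg
    refine ⟨f, mem_closedBall_zero_iff.2 (hf.trans_le hgr), ?_⟩
    ext y
    exact hfg y

-- `f = P g` for any norm-preserving extension `g` of `f|_Y`.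
lemma norm_le_norm_comp_subtypeL_of_projection {P : (X →L[ℝ] ℝ) →L[ℝ] (X →L[ℝ] ℝ)}
    (hP : ‖P‖ ≤ 1) (hker : ∀ f, (∀ y ∈ Y, f y = 0) → P f = 0) {f : X →L[ℝ] ℝ}
    (hf : P f = f) :
    ‖f‖ ≤ ‖f.comp Y.subtypeL‖ := by
  obtain ⟨g, hgf, hg⟩ := exists_extension_norm_eq Y (f.comp Y.subtypeL)
  have hPg : P g = f := by
    have : P (g - f) = 0 := hker _ fun y hy => sub_eq_zero.2 (hgf ⟨y, hy⟩)
    rwa [map_sub, hf, sub_eq_zero] at this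
  calc ‖f‖ = ‖P g‖ := by rw [hPg]
    _ ≤ ‖P‖ * ‖g‖ := P.le_opNorm g
    _ ≤ ‖g‖ := mul_le_of_le_one_left (norm_nonneg g) hP
    _ = ‖f.comp Y.subtypeL‖ := hg

lemma dist_le_dist_comp_subtypeL_of_projection {P : (X →L[ℝ] ℝ) →L[ℝ] (X →L[ℝ] ℝ)}
    (hP : ‖P‖ ≤ 1) (hker : ∀ f, (∀ y ∈ Y, f y = 0) → P f = 0)
    (hproj : ∀ f, P (P f) = P f) {f₁ f₂ : X →L[ℝ] ℝ} (hf₁ : f₁ ∈ Set.range P)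
    (hf₂ : f₂ ∈ Set.range P) :
    dist f₁ f₂ ≤ dist (f₁.comp Y.subtypeL) (f₂.comp Y.subtypeL) := by
  obtain ⟨f₁, rfl⟩ := hf₁
  obtain ⟨f₂, rfl⟩ := hf₂
  rw [dist_eq_norm, dist_eq_norm (E := Y →L[ℝ] ℝ), ← ContinuousLinearMap.sub_comp]
  exact norm_le_norm_comp_subtypeL_of_projection Y hP hker (by rw [map_sub, hproj, hproj])

end Restriction

theorem wstarBHP_of_strictIdeal_general (X : Type*) [NormedAddCommGroup X] [NormedSpace ℝ X]
    (Y : Subspace ℝ X) (hY : IsStrictIdeal Y) (h : wstarBHP Y) :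
    wstarBHP X := by
  obtain ⟨P, hPnorm, hPproj, hPker, hPdense⟩ := hY
  intro ε hε
  obtain ⟨U, hUopen, ⟨g, hgU, hgB⟩, hUdiam⟩ := h ε hε
  set R : (X →L[ℝ] ℝ) → (Y →L[ℝ] ℝ) := fun f => f.comp Y.subtypeL
  have hRB : R '' closedBall 0 1 = closedBall 0 1 := image_comp_subtypeL_closedBall Y 1
  have hVopen : IsOpen[wstarTopology X] (R ⁻¹' U) :=
    @Continuous.isOpen_preimage _ _ (wstarTopology X) (wstarTopology Y) _
      (continuous_wstar_comp_subtypeL Y) U hUopen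
  refine ⟨R ⁻¹' U, hVopen, ?_, ?_⟩
  · obtain ⟨f, hfB, rfl⟩ := hRB.symm ▸ hgB
    exact ⟨f, hgU, hfB⟩
  have hUB : Bornology.IsBounded (U ∩ closedBall 0 1) :=
    isBounded_closedBall.subset Set.inter_subset_right
  have hRmaps : ∀ f ∈ R ⁻¹' U ∩ closedBall 0 1, R f ∈ U ∩ closedBall 0 1 :=
    fun f ⟨hfU, hfB⟩ => ⟨hfU, hRB ▸ Set.mem_image_of_mem R hfB⟩
  calc diam (R ⁻¹' U ∩ closedBall 0 1)
      ≤ diam (R ⁻¹' U ∩ (Set.range P ∩ closedBall 0 1)) :=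
      diam_le_of_subset_wstar_closure
        (isBounded_closedBall.subset (Set.inter_subset_right.trans Set.inter_subset_right))
        fun f ⟨hfV, hfB⟩ =>
          @IsOpen.inter_closure _ (wstarTopology X) _ _ hVopen f ⟨hfV, hPdense hfB⟩
    _ ≤ diam (U ∩ closedBall 0 1) :=
      diam_le_of_forall_dist_le diam_nonneg fun f₁ ⟨hf₁U, hf₁P, hf₁B⟩ f₂ ⟨hf₂U, hf₂P, hf₂B⟩ =>
        (dist_le_dist_comp_subtypeL_of_projection Y hPnorm.le (fun f => (hPker f).2) hPproj
          hf₁P hf₂P).trans <|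
            dist_le_diam_of_mem hUB (hRmaps f₁ ⟨hf₁U, hf₁B⟩) (hRmaps f₂ ⟨hf₂U, hf₂B⟩)
    _ < ε := hUdiam

/-- If `Y` is a strict ideal in the Banach space `X` and `Y*` has the
weak-star Ball Huskable Property, then `X*` has the weak-star Ball Huskable Property. -/
theorem wstarBHP_of_strictIdeal (X : Type*) [NormedAddCommGroup X] [NormedSpace ℝ X]
    [CompleteSpace X] (Y : Subspace ℝ X) (hYc : IsClosed (Y : Set X))
    (hY : IsStrictIdeal Y) (h : wstarBHP Y) :
    wstarBHP X :=
  wstarBHP_of_strictIdeal_general X Y hY h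
end
end

section
/- For every finite collection f_1, …, f_n of norm-one functions in C[0,1] (real-valued continuous functions on [0,1] with the supremum norm) and every ε > 0, there exists g ∈ C[0,1] with ‖g‖ = 1 such that ‖f_i + g‖ ≥ 2 − ε and ‖f_i − g‖ ≥ 2 − ε for all i = 1, 2, …, n. -/
open Metric Topology
open scoped ENNReal

noncomputable section

/-!
Every `f i` attains its norm at some `t i`, and by uniform equicontinuity of the finite family
there is one `δ` such that `|f i - f i (t i)| < ε` on the `δ`-neighbourhood of every `t i`.
The function `g = cos (N π x)` with `1 / N < δ` has norm one and equals both `1` and `-1` within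
`δ` of any point of `[0, 1]` (at consecutive grid points `k / N`, `(k + 1) / N`). Evaluating
`f i ± g` at the right one of these two points, according to the sign of `f i (t i)`, gives a
value of absolute value at least `2 - ε`.
-/

open Real Set

theorem ContinuousMap.exists_norm_apply_eq_norm {X E : Type*} [TopologicalSpace X]
    [CompactSpace X] [Nonempty X] [NormedAddCommGroup E] (f : C(X, E)) :
    ∃ t, ‖f t‖ = ‖f‖ := by
  obtain ⟨t, -, ht⟩ := isCompact_univ.exists_isMaxOn univ_nonempty
    (continuous_norm.comp f.continuous).continuousOn
  refine ⟨t, le_antisymm (f.norm_coe_le_norm t) ?_⟩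
  exact (f.norm_le (norm_nonneg _)).2 fun x => ht (mem_univ x)

theorem ContinuousMap.norm_add_and_norm_sub_ge {X : Type*} [TopologicalSpace X] [CompactSpace X]
    (f g : C(X, ℝ)) {t p q : X} {ε : ℝ} (hp : dist (f p) (f t) < ε)
    (hq : dist (f q) (f t) < ε) (hgp : g p = 1) (hgq : g q = -1) :
    |f t| + 1 - ε ≤ ‖f + g‖ ∧ |f t| + 1 - ε ≤ ‖f - g‖ := by
  rw [Real.dist_eq, abs_lt] at hp hq
  have add_le (x : X) : |f x + g x| ≤ ‖f + g‖ := (f + g).norm_coe_le_norm x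
  have sub_le (x : X) : |f x - g x| ≤ ‖f - g‖ := (f - g).norm_coe_le_norm x
  rcases le_or_gt 0 (f t) with hft | hft
  · rw [abs_of_nonneg hft]
    constructor
    · refine le_trans ?_ ((le_abs_self _).trans (add_le p))
      linarith
    · refine le_trans ?_ ((le_abs_self _).trans (sub_le q))
      linarith
  · rw [abs_of_neg hft]
    constructor
    · refine le_trans ?_ ((neg_le_abs _).trans (add_le q))
      linarith
    · refine le_trans ?_ ((neg_le_abs _).trans (sub_le p))
      linarith

theorem exists_nat_div_near {N : ℕ} (hN : 0 < N) {u : ℝ} (hu : u ∈ Icc (0 : ℝ) 1) :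
    ∃ k : ℕ, k < N ∧ |k / N - u| ≤ 1 / N ∧ |(k + 1 : ℕ) / N - u| ≤ 1 / N := by
  have hN' : (0 : ℝ) < N := by exact_mod_cast hN
  have hNu : 0 ≤ N * u := mul_nonneg hN'.le hu.1
  set k := min ⌊N * u⌋₊ (N - 1)
  have hkN : k + 1 ≤ N := by omega
  have hk_le : (k : ℝ) ≤ N * u := (Nat.cast_le.2 (min_le_left _ _)).trans (Nat.floor_le hNu)
  have hk_ge : N * u ≤ k + 1 := by
    rcases le_total ⌊N * u⌋₊ (N - 1) with h | h
    · rw [show k = ⌊N * u⌋₊ from min_eq_left h]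
      exact (Nat.lt_floor_add_one _).le
    · calc N * u ≤ N := mul_le_of_le_one_right hN'.le hu.2
        _ = k + 1 := by exact_mod_cast (show N = k + 1 by omega)
  have near (m : ℕ) (h₁ : (m : ℝ) ≤ N * u + 1) (h₂ : N * u - 1 ≤ m) : |m / N - u| ≤ 1 / N := by
    rw [show (m : ℝ) / N - u = (m - N * u) / N by field_simp, abs_div, abs_of_pos hN']
    exact div_le_div_of_nonneg_right (abs_le.2 ⟨by linarith, by linarith⟩) hN'.le
  refine ⟨k, by omega, near k (by linarith) (by linarith), near (k + 1) ?_ ?_⟩ <;>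
    push_cast <;> linarith

theorem cos_mul_pi_nat_div {N : ℕ} (hN : N ≠ 0) (k : ℕ) :
    cos (N * π * (k / N)) = (-1) ^ k := by
  rw [← cos_nat_mul_pi k]
  congr 1
  field_simp

def cosWave (N : ℕ) : C(Icc (0 : ℝ) 1, ℝ) :=
  ⟨fun x => cos (N * π * x), by fun_prop⟩

theorem norm_cosWave (N : ℕ) : ‖cosWave N‖ = 1 := by
  refine le_antisymm ((cosWave N).norm_le zero_le_one |>.2 fun x => abs_cos_le_one _) ?_
  simpa [cosWave] using (cosWave N).norm_coe_le_norm ⟨0, left_mem_Icc.2 zero_le_one⟩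

theorem exists_cosWave_eq_one_and_neg_one {N : ℕ} (hN : 0 < N) (u : Icc (0 : ℝ) 1) :
    ∃ p q, dist p u ≤ 1 / N ∧ dist q u ≤ 1 / N ∧ cosWave N p = 1 ∧ cosWave N q = -1 := by
  have hN' : (0 : ℝ) < N := by exact_mod_cast hN
  have grid (m : ℕ) (hm : m ≤ N) :
      ∃ x : Icc (0 : ℝ) 1, dist x u = |(m : ℝ) / N - u| ∧ cosWave N x = (-1) ^ m := by
    have hmN : (m : ℝ) / N ≤ 1 := div_le_one_of_le₀ (by exact_mod_cast hm) hN'.le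
    exact ⟨⟨m / N, by positivity, hmN⟩, rfl, cos_mul_pi_nat_div hN.ne' m⟩
  obtain ⟨k, hk, hk_near, hk_succ_near⟩ := exists_nat_div_near hN u.2
  obtain ⟨x, hx, hgx⟩ := grid k hk.le
  obtain ⟨y, hy, hgy⟩ := grid (k + 1) hk
  rw [pow_succ, mul_neg_one] at hgy
  rcases Nat.even_or_odd k with hk_even | hk_odd
  · rw [hk_even.neg_one_pow] at hgx hgy
    exact ⟨x, y, hx ▸ hk_near, hy ▸ hk_succ_near, hgx, hgy⟩
  · rw [hk_odd.neg_one_pow] at hgx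
    rw [hk_odd.neg_one_pow, neg_neg] at hgy
    exact ⟨y, x, hy ▸ hk_succ_near, hx ▸ hk_near, hgy, hgx⟩

/-- For any finitely many norm-one functions `f 1, …, f n` in `C[0,1]` and
any `ε > 0` there is a norm-one `g ∈ C[0,1]` with `‖f i ± g‖ ≥ 2 - ε` for all `i`. -/
theorem exists_far_function_CI (n : ℕ) (f : Fin n → C(Set.Icc (0 : ℝ) 1, ℝ))
    (hf : ∀ i, ‖f i‖ = 1) (ε : ℝ) (hε : 0 < ε) :
    ∃ g : C(Set.Icc (0 : ℝ) 1, ℝ), ‖g‖ = 1 ∧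
      ∀ i, 2 - ε ≤ ‖f i + g‖ ∧ 2 - ε ≤ ‖f i - g‖ := by
  have hequi : UniformEquicontinuous fun i x => f i x :=
    uniformEquicontinuous_finite.2 fun i =>
      CompactSpace.uniformContinuous_of_continuous (f i).continuous
  obtain ⟨δ, hδ, hfδ⟩ := Metric.uniformEquicontinuous_iff.1 hequi ε hε
  obtain ⟨N, hN⟩ := exists_nat_gt (1 / δ)
  have hN0 : 0 < N := by exact_mod_cast (one_div_pos.2 hδ).trans hN
  have hNδ : 1 / (N : ℝ) < δ := (one_div_lt (by positivity) hδ).2 hN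
  refine ⟨cosWave N, norm_cosWave N, fun i => ?_⟩
  obtain ⟨t, ht⟩ := (f i).exists_norm_apply_eq_norm
  obtain ⟨p, q, hp, hq, hgp, hgq⟩ := exists_cosWave_eq_one_and_neg_one hN0 t
  have key := (f i).norm_add_and_norm_sub_ge (cosWave N) (hfδ p t (hp.trans_lt hNδ) i)
    (hfδ q t (hq.trans_lt hNδ) i) hgp hgq
  rw [← Real.norm_eq_abs, ht, hf i, one_add_one_eq_two] at key
  exact key
end
end

section
/- Every convex combination of w*-slices of the closed unit ball of C[0,1]* has norm-diameter equal to 2; that is, for any norm-one functions x_1, …, x_n in C[0,1], any α_1, …, α_n > 0 and any λ_1, …, λ_n ≥ 0 with ∑λ_i = 1, the Minkowski sum ∑ λ_i S(B_{C[0,1]*}, x_i, α_i) has diameter 2. In particular, C[0,1]* does not have the w*-Ball Small Combination of Slices Property. -/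
open Metric Topology
open scoped ENNReal

noncomputable section

/-! For a norm-one `x ∈ C(K)` choose `t` with `|x t| = 1`; the signed point evaluations
`x t • δ_s` lie in the slice for all `s` in the open set `{s | 1 - α < x t * x s}`, which
contains `t` and is therefore infinite when `K` has no isolated points. Picking points
`u i`, `v i` in the set of the `i`-th slice, all `2n` of them distinct, Tietze gives
`φ` with `‖φ‖ ≤ 1`, `φ (u i) = x_i t_i` and `φ (v i) = -x_i t_i`; the two convex combinations
of these evaluations then differ by `2` at `φ`. -/

open Function Set

theorem exists_injective_forall_mem {α ι : Type*} [Finite ι] (W : ι → Set α)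
    (hW : ∀ i, (W i).Infinite) : ∃ p : ι → α, Injective p ∧ ∀ i, p i ∈ W i := by
  induction ι using Finite.induction_empty_option with
  | of_equiv e ih =>
    obtain ⟨p, hp, hpW⟩ := ih (W ∘ e) (fun i => hW (e i))
    exact ⟨p ∘ e.symm, hp.comp e.symm.injective, fun i => by simpa using hpW (e.symm i)⟩
  | h_empty => exact ⟨PEmpty.elim, fun i => i.elim, fun i => i.elim⟩
  | h_option ih =>
    obtain ⟨p, hp, hpW⟩ := ih (W ∘ some) (fun i => hW (some i))
    obtain ⟨a, haW, har⟩ := ((hW none).sdiff (finite_range p)).nonempty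
    refine ⟨fun o => o.elim a p, ?_, fun o => o.casesOn haW hpW⟩
    rintro (_ | i) (_ | j) (h : Option.elim _ a p = Option.elim _ a p)
    · rfl
    · exact absurd ⟨j, h.symm⟩ har
    · exact absurd ⟨i, h⟩ har
    · exact congrArg some (hp h)

section combSlices

variable {E : Type*} [NormedAddCommGroup E] [NormedSpace ℝ E] {n : ℕ} {l : Fin n → ℝ}
  {S : Fin n → Set E}

theorem combSlices_subset_closedBall (hl : ∀ i, 0 ≤ l i) (hsum : ∑ i, l i = 1)
    (hS : ∀ i, S i ⊆ closedBall 0 1) : combSlices l S ⊆ closedBall 0 1 := by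
  rintro _ ⟨v, hv, rfl⟩
  exact (convex_closedBall 0 1).sum_mem (fun i _ => hl i) hsum fun i _ => hS i (hv i)

theorem diam_combSlices_le_two (hl : ∀ i, 0 ≤ l i) (hsum : ∑ i, l i = 1)
    (hS : ∀ i, S i ⊆ closedBall 0 1) : diam (combSlices l S) ≤ 2 := by
  calc diam (combSlices l S) ≤ diam (closedBall (0 : E) 1) :=
        diam_mono (combSlices_subset_closedBall hl hsum hS) isBounded_closedBall
    _ ≤ 2 * 1 := diam_closedBall zero_le_one
    _ = 2 := mul_one 2

end combSlices

theorem diam_combSlices_eq_two_of_apply_eq_one_apply_eq_neg_one {X : Type*}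
    [NormedAddCommGroup X] [NormedSpace ℝ X] {n : ℕ} {l : Fin n → ℝ}
    {S : Fin n → Set (X →L[ℝ] ℝ)} (hl : ∀ i, 0 ≤ l i) (hsum : ∑ i, l i = 1)
    (hS : ∀ i, S i ⊆ closedBall 0 1) {φ : X} (hφ : ‖φ‖ ≤ 1)
    (hφS : ∀ i, ∃ f ∈ S i, ∃ g ∈ S i, f φ = 1 ∧ g φ = -1) :
    diam (combSlices l S) = 2 := by
  choose f hf g hg hfφ hgφ using hφS
  have hbdd : Bornology.IsBounded (combSlices l S) :=
    isBounded_closedBall.subset (combSlices_subset_closedBall hl hsum hS)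
  refine (diam_combSlices_le_two hl hsum hS).antisymm ?_
  calc (2 : ℝ) = (∑ i, l i • f i - ∑ i, l i • g i) φ := by
        simp [hfφ, hgφ, ← Finset.sum_sub_distrib, Finset.sum_add_distrib, hsum]; norm_num
    _ ≤ ‖∑ i, l i • f i - ∑ i, l i • g i‖ * 1 :=
        (Real.le_norm_self _).trans (ContinuousLinearMap.le_opNorm_of_le _ hφ)
    _ = dist (∑ i, l i • f i) (∑ i, l i • g i) := by rw [mul_one, dist_eq_norm]
    _ ≤ diam (combSlices l S) := dist_le_diam_of_mem hbdd ⟨f, hf, rfl⟩ ⟨g, hg, rfl⟩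

namespace ContinuousMap

variable {K : Type*} [TopologicalSpace K] [CompactSpace K]

theorem exists_norm_apply_eq_norm_s19 {f : C(K, ℝ)} (hf : f ≠ 0) : ∃ t, ‖f t‖ = ‖f‖ := by
  have : Nonempty K := by
    by_contra h
    rw [not_nonempty_iff] at h
    exact hf (Subsingleton.elim _ _)
  obtain ⟨t, -, ht⟩ := isCompact_univ.exists_isMaxOn univ_nonempty
    (continuous_norm.comp f.continuous).continuousOn
  exact ⟨t, le_antisymm (f.norm_coe_le_norm t) (f.norm_le_of_nonempty.2 fun s => ht (mem_univ s))⟩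

theorem smul_evalCLM_mem_wstarSlice {x : C(K, ℝ)} {α ε : ℝ} {s : K} (hε : |ε| ≤ 1)
    (hs : 1 - α < ε * x s) : ε • evalCLM ℝ s ∈ wstarSlice C(K, ℝ) x α := by
  refine ⟨mem_closedBall_zero_iff.2 <| ContinuousLinearMap.opNorm_le_bound _ zero_le_one
    fun f => ?_, hs⟩
  rw [one_mul]
  change |ε * f s| ≤ ‖f‖
  rw [abs_mul, ← Real.norm_eq_abs (f s)]
  exact (mul_le_of_le_one_left (norm_nonneg _) hε).trans (f.norm_coe_le_norm s)

variable [T2Space K]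

theorem exists_norm_le_one_apply_eq {ι : Type*} [Finite ι] {p : ι → K}
    (hp : Injective p) (c : ι → ℝ) (hc : ∀ i, |c i| ≤ 1) :
    ∃ φ : C(K, ℝ), ‖φ‖ ≤ 1 ∧ ∀ i, φ (p i) = c i := by
  let _ : TopologicalSpace ι := ⊥
  have : DiscreteTopology ι := ⟨rfl⟩
  obtain ⟨φ, hφ, hφp⟩ := exists_extension_forall_mem_of_isClosedEmbedding
    ⟨c, continuous_of_discreteTopology⟩ (t := Icc (-1) 1)
    (fun i => abs_le.1 (hc i)) (nonempty_Icc.2 (by norm_num))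
    (continuous_of_discreteTopology.isClosedEmbedding hp)
  exact ⟨φ, (φ.norm_le zero_le_one).2 fun s => abs_le.2 (hφ s), fun i => congrFun hφp i⟩

variable [PerfectSpace K]

theorem exists_forall_apply_eq_one_apply_eq_neg_one {n : ℕ}
    {x : Fin n → C(K, ℝ)} {α : Fin n → ℝ} (hx : ∀ i, ‖x i‖ = 1) (hα : ∀ i, 0 < α i) :
    ∃ φ : C(K, ℝ), ‖φ‖ ≤ 1 ∧ ∀ i, ∃ f ∈ wstarSlice C(K, ℝ) (x i) (α i),
      ∃ g ∈ wstarSlice C(K, ℝ) (x i) (α i), f φ = 1 ∧ g φ = -1 := by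
  have hx0 : ∀ i, x i ≠ 0 := fun i h => by simpa [h] using hx i
  choose t ht using fun i => exists_norm_apply_eq_norm_s19 (hx0 i)
  have habs : ∀ i, |x i (t i)| = 1 := fun i => (ht i).trans (hx i)
  have hsq : ∀ i, x i (t i) * x i (t i) = 1 := fun i => by
    rw [← abs_mul_abs_self, habs i, one_mul]
  set W : Fin n → Set K := fun i => {s | 1 - α i < x i (t i) * x i s}
  have htW : ∀ i, t i ∈ W i := fun i => by
    change 1 - α i < x i (t i) * x i (t i)
    linarith [hsq i, hα i]
  have hWinf : ∀ i, (W i).Infinite := fun i =>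
    infinite_of_mem_nhds (t i) <|
      (isOpen_lt continuous_const (by fun_prop)).mem_nhds (htW i)
  obtain ⟨p, hp, hpW⟩ := exists_injective_forall_mem (fun k : Fin n × Bool => W k.1)
    fun k => hWinf k.1
  obtain ⟨φ, hφ, hφp⟩ := exists_norm_le_one_apply_eq hp
    (fun k => if k.2 then x k.1 (t k.1) else -x k.1 (t k.1))
    fun k => by split_ifs <;> simp [habs]
  refine ⟨φ, hφ, fun i => ⟨_, smul_evalCLM_mem_wstarSlice (habs i).le (hpW (i, true)),
    _, smul_evalCLM_mem_wstarSlice (habs i).le (hpW (i, false)), ?_, ?_⟩⟩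
  all_goals
    change x i (t i) * φ (p _) = _
    simp [hφp, hsq]

theorem diam_combSlices_wstarSlice_eq_two {n : ℕ} {x : Fin n → C(K, ℝ)} {α l : Fin n → ℝ}
    (hx : ∀ i, ‖x i‖ = 1) (hα : ∀ i, 0 < α i) (hl : ∀ i, 0 ≤ l i) (hsum : ∑ i, l i = 1) :
    diam (combSlices l fun i => wstarSlice C(K, ℝ) (x i) (α i)) = 2 := by
  obtain ⟨φ, hφ, hφS⟩ := exists_forall_apply_eq_one_apply_eq_neg_one hx hα
  exact diam_combSlices_eq_two_of_apply_eq_one_apply_eq_neg_one hl hsum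
    (fun i => sep_subset _ _) hφ hφS

theorem not_wstarBSCSP : ¬ wstarBSCSP C(K, ℝ) := fun h => by
  obtain ⟨n, x, α, l, hx, hα, hl, hsum, hlt⟩ := h 1 one_pos
  linarith [diam_combSlices_wstarSlice_eq_two hx hα hl hsum]

end ContinuousMap

/-- Every convex combination of weak-star slices of the closed unit ball of
`C[0,1]*` has diameter `2`; in particular `C[0,1]*` fails the weak-star Ball Small
Combination of Slices Property. -/
theorem diam_combSlices_CIdual_eq_two :
    (∀ (n : ℕ) (x : Fin n → C(Set.Icc (0 : ℝ) 1, ℝ)) (α l : Fin n → ℝ),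
      (∀ i, ‖x i‖ = 1) → (∀ i, 0 < α i) → (∀ i, 0 ≤ l i) → (∑ i, l i = 1) →
      Metric.diam
        (combSlices l (fun i => wstarSlice (C(Set.Icc (0 : ℝ) 1, ℝ)) (x i) (α i))) = 2) ∧
    ¬ wstarBSCSP C(Set.Icc (0 : ℝ) 1, ℝ) :=
  ⟨fun _ _ _ _ => ContinuousMap.diam_combSlices_wstarSlice_eq_two, ContinuousMap.not_wstarBSCSP⟩
end
end
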